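/- arXiv:1312.2970 — 6 statements merged into one kernel-verified Lean document; each statement's English description precedes it below -/
import Mathlib

section
/- Let K be a finite abelian group and k a field (algebraically closed, with char k not dividing |K|). If [-,-] : K × K → k^× is a non-degenerate skew-symmetric bilinear form (meaning [x,x]=1 for all x, and for every nonzero x there is y with [x,y] ≠ 1), then K admits subgroups K₁ and K₂ such that K = K₁ ⊕ K₂, the form restricted to each Kᵢ × Kᵢ is trivial, and the induced pairing K₁ × K₂ → k^× given by (x₁,x₂) ↦ [x₁,x₂] is non-degenerate. -/
section Helpers

variable {k K : Type} [Field k] [CommGroup K] {f : K → K → kˣ}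

private def stmt0LHom (hbl : ∀ x y z : K, f (x * y) z = f x z * f y z) (z : K) : K →* kˣ :=
  MonoidHom.mk' (fun w => f w z) (fun a b => hbl a b z)

private def stmt0RHom (hbr : ∀ x y z : K, f x (y * z) = f x y * f x z) (z : K) : K →* kˣ :=
  MonoidHom.mk' (fun w => f z w) (fun a b => hbr z a b)

private lemma f_one_left (hbl : ∀ x y z : K, f (x * y) z = f x z * f y z) (y : K) :
    f 1 y = 1 := map_one (stmt0LHom hbl y)

private lemma f_one_right (hbr : ∀ x y z : K, f x (y * z) = f x y * f x z) (x : K) :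
    f x 1 = 1 := map_one (stmt0RHom hbr x)

private lemma f_zpow_left (hbl : ∀ x y z : K, f (x * y) z = f x z * f y z) (x y : K) (m : ℤ) :
    f (x ^ m) y = f x y ^ m := map_zpow (stmt0LHom hbl y) x m

private lemma f_pow_left (hbl : ∀ x y z : K, f (x * y) z = f x z * f y z) (x y : K) (m : ℕ) :
    f (x ^ m) y = f x y ^ m := map_pow (stmt0LHom hbl y) x m

private lemma f_zpow_right (hbr : ∀ x y z : K, f x (y * z) = f x y * f x z) (x y : K) (m : ℤ) :
    f x (y ^ m) = f x y ^ m := map_zpow (stmt0RHom hbr x) y m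

private lemma f_pow_right (hbr : ∀ x y z : K, f x (y * z) = f x y * f x z) (x y : K) (m : ℕ) :
    f x (y ^ m) = f x y ^ m := map_pow (stmt0RHom hbr x) y m

private lemma f_inv_left (hbl : ∀ x y z : K, f (x * y) z = f x z * f y z) (x y : K) :
    f x⁻¹ y = (f x y)⁻¹ := map_inv (stmt0LHom hbl y) x

private lemma f_swap (hbl : ∀ x y z : K, f (x * y) z = f x z * f y z)
    (hbr : ∀ x y z : K, f x (y * z) = f x y * f x z)
    (hskew : ∀ x : K, f x x = 1) (x y : K) : f y x = (f x y)⁻¹ := by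
  have h := hskew (x * y)
  rw [hbl, hbr, hbr, hskew x, hskew y, one_mul, mul_one] at h
  exact eq_inv_of_mul_eq_one_right h

end Helpers

private theorem stmt0Aux (k : Type) [Field k] :
    ∀ (N : ℕ) (K : Type) (_inst1 : CommGroup K) (_inst2 : Fintype K),
      Fintype.card K ≤ N →
      ∀ f : K → K → kˣ,
        (∀ x y z : K, f (x * y) z = f x z * f y z) →
        (∀ x y z : K, f x (y * z) = f x y * f x z) →
        (∀ x : K, f x x = 1) →
        (∀ x : K, x ≠ 1 → ∃ y : K, f x y ≠ 1) →
        ∃ K₁ K₂ : Subgroup K,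
          IsCompl K₁ K₂ ∧ (∀ x ∈ K₁, ∀ y ∈ K₁, f x y = 1) ∧
            (∀ x ∈ K₂, ∀ y ∈ K₂, f x y = 1) := by
  intro N
  induction N with
  | zero =>
    intro K _ _ hcard
    exact absurd (lt_of_lt_of_le Fintype.card_pos hcard) (lt_irrefl 0)
  | succ N ih =>
    intro K _ _ hcard f hbl hbr hskew hnd
    classical
    by_cases htriv : ∀ z : K, z = 1
    · refine ⟨⊤, ⊥, isCompl_top_bot, ?_, ?_⟩
      · intro a _ b _; rw [htriv a]; exact f_one_left hbl b
      · intro a _ b _; rw [htriv a]; exact f_one_left hbl b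
    push_neg at htriv
    obtain ⟨g, hg⟩ := htriv
    obtain ⟨x, hx⟩ := Monoid.exists_orderOf_eq_exponent (Monoid.ExponentExists.of_finite (G := K))
    set n : ℕ := Monoid.exponent K with hn
    have hn0 : n ≠ 0 := Monoid.exponent_ne_zero_of_finite
    have hn1 : n ≠ 1 := by
      intro h
      apply hg
      have hd := Monoid.order_dvd_exponent g
      rw [← hn, h, Nat.dvd_one] at hd
      exact orderOf_eq_one_iff.mp hd
    have hexp : ∀ z : K, z ^ n = 1 := fun z => Monoid.pow_exponent_eq_one z
    -- the homomorphism y ↦ f x y and its range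
    set φ : K →* kˣ := stmt0RHom hbr x with hφ
    set S : Subgroup kˣ := φ.range with hS
    haveI hSfin : Finite S := by
      have h1 : Set.Finite (Set.range φ) := Set.finite_range φ
      have h2 : (S : Set kˣ) = Set.range φ := MonoidHom.coe_range φ
      rw [← h2] at h1
      exact h1.to_subtype
    haveI : IsCyclic S := subgroup_units_cyclic S
    obtain ⟨u, hu⟩ := IsCyclic.exists_generator (α := S)
    set d : ℕ := orderOf u with hd
    -- all values f x y are killed by d
    have hkill : ∀ z : K, f x z ^ d = 1 := by
      intro z
      have hz : f x z ∈ S := ⟨z, rfl⟩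
      obtain ⟨m, hm⟩ := hu ⟨f x z, hz⟩
      have : (⟨f x z, hz⟩ : S) ^ d = 1 := by
        rw [← hm, ← zpow_natCast, ← zpow_mul, mul_comm, zpow_mul, zpow_natCast, pow_orderOf_eq_one,
          one_zpow]
      exact congrArg Subtype.val this
    have hnd' : n ∣ d := by
      rw [← hx]
      rw [orderOf_dvd_iff_pow_eq_one]
      by_contra hne
      obtain ⟨w, hw⟩ := hnd _ hne
      apply hw
      rw [f_pow_left hbl, hkill]
    obtain ⟨y, hy⟩ : ∃ y : K, φ y = (u : kˣ) := u.2
    set ζ : kˣ := f x y with hζ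
    have hζu : ζ = (u : kˣ) := hy
    have horder : orderOf ζ = n := by
      have h1 : orderOf (u : kˣ) = d := orderOf_injective S.subtype Subtype.coe_injective u
      have h2 : ζ ^ n = 1 := by
        rw [hζ, ← f_pow_right hbr, hexp, f_one_right hbr]
      have h3 : orderOf ζ ∣ n := orderOf_dvd_of_pow_eq_one h2
      have h4 : orderOf ζ = d := by rw [hζu, h1]
      exact Nat.dvd_antisymm h3 (h4 ▸ hnd')
    have hζ1 : ζ ≠ 1 := by
      intro h
      exact hn1 (by rw [← horder, h, orderOf_one])
    have hyo : orderOf y = n := by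
      have h1 : orderOf y ∣ n := hn ▸ Monoid.order_dvd_exponent y
      have h2 : ζ ^ orderOf y = 1 := by
        rw [hζ, ← f_pow_right hbr, pow_orderOf_eq_one, f_one_right hbr]
      have h3 : n ∣ orderOf y := horder ▸ orderOf_dvd_of_pow_eq_one h2
      exact Nat.dvd_antisymm h1 h3
    -- discrete logarithm: every n-th root of unity is a power of ζ
    haveI : NeZero n := ⟨hn0⟩
    have hdl : ∀ α : kˣ, α ^ n = 1 → ∃ i : ℕ, ζ ^ i = α := by
      have hprim : IsPrimitiveRoot ((ζ : k)) n := by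
        have := IsPrimitiveRoot.orderOf (ζ : k)
        rwa [orderOf_units, horder] at this
      intro α hα
      have hαk : (α : k) ^ n = 1 := by
        have := congrArg (Units.val) hα
        push_cast at this
        exact this
      obtain ⟨i, _, hi⟩ := hprim.eq_pow_of_pow_eq_one hαk
      exact ⟨i, Units.ext (by push_cast; exact hi)⟩
    have hswap := f_swap hbl hbr hskew
    -- the orthogonal complement of the hyperbolic plane ⟨x, y⟩
    set P : Subgroup K := (stmt0LHom hbl x).ker ⊓ (stmt0LHom hbl y).ker with hP
    have hPmem : ∀ z : K, z ∈ P ↔ f z x = 1 ∧ f z y = 1 := by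
      intro z
      rw [hP, Subgroup.mem_inf, MonoidHom.mem_ker, MonoidHom.mem_ker]
      exact Iff.rfl
    have hxP : x ∉ P := by
      intro h
      exact hζ1 ((hPmem x).mp h).2
    -- decomposition of an arbitrary element
    have hdec : ∀ z : K, ∃ (a b : ℤ) (p : K), p ∈ P ∧ z = x ^ a * y ^ b * p := by
      intro z
      obtain ⟨c, hc⟩ := hdl (f z x) (by rw [← f_pow_left hbl, hexp, f_one_left hbl])
      obtain ⟨e, he⟩ := hdl (f z y) (by rw [← f_pow_left hbl, hexp, f_one_left hbl])
      refine ⟨(e : ℤ), -(c : ℤ), (x ^ (e : ℤ) * y ^ (-(c : ℤ)))⁻¹ * z, ?_, by group⟩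
      have hfx : f (x ^ (e : ℤ) * y ^ (-(c : ℤ))) x = ζ ^ (c : ℤ) := by
        rw [hbl, f_zpow_left hbl, f_zpow_left hbl, hskew, one_zpow, one_mul, hswap x y, hζ]
        group
      have hfy : f (x ^ (e : ℤ) * y ^ (-(c : ℤ))) y = ζ ^ (e : ℤ) := by
        rw [hbl, f_zpow_left hbl, f_zpow_left hbl, hskew y, one_zpow, mul_one, ← hζ]
      rw [hPmem]
      constructor
      · rw [hbl, f_inv_left hbl, hfx, ← hc, zpow_natCast, inv_mul_cancel]
      · rw [hbl, f_inv_left hbl, hfy, ← he, zpow_natCast, inv_mul_cancel]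
    -- the restricted form on P
    set F : ↥P → ↥P → kˣ := fun a b => f a b with hF
    have hFbl : ∀ a b c : ↥P, F (a * b) c = F a c * F b c := fun a b c => hbl a b c
    have hFbr : ∀ a b c : ↥P, F a (b * c) = F a b * F a c := fun a b c => hbr a b c
    have hFskew : ∀ a : ↥P, F a a = 1 := fun a => hskew a
    have hFnd : ∀ a : ↥P, a ≠ 1 → ∃ b : ↥P, F a b ≠ 1 := by
      intro a ha
      have ha' : (a : K) ≠ 1 := by
        intro h
        exact ha (Subtype.ext h)
      obtain ⟨w, hw⟩ := hnd _ ha'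
      obtain ⟨b, c, p, hp, hwdec⟩ := hdec w
      refine ⟨⟨p, hp⟩, ?_⟩
      have hax : f (a : K) x = 1 := ((hPmem a).mp a.2).1
      have hay : f (a : K) y = 1 := ((hPmem a).mp a.2).2
      have hfw : f (a : K) w = f (a : K) p := by
        rw [hwdec, hbr, hbr, f_zpow_right hbr, f_zpow_right hbr, hax, hay, one_zpow, one_zpow,
          one_mul, one_mul]
      intro hFc
      exact hw (by rw [hfw]; exact hFc)
    -- cardinality decreases
    have hcard' : Fintype.card ↥P ≤ N := by
      have hlt : Fintype.card ↥P < Fintype.card K := by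
        have := Fintype.card_subtype_lt (p := fun z => z ∈ P) hxP
        simpa using this
      omega
    obtain ⟨L₁, L₂, hLcompl, hL₁, hL₂⟩ :=
      ih ↥P inferInstance inferInstance hcard' F hFbl hFbr hFskew hFnd
    have hPx : ∀ p ∈ P, f p x = 1 ∧ f x p = 1 := fun p hp =>
      ⟨((hPmem p).mp hp).1, by rw [hswap, ((hPmem p).mp hp).1, inv_one]⟩
    have hPy : ∀ p ∈ P, f p y = 1 ∧ f y p = 1 := fun p hp =>
      ⟨((hPmem p).mp hp).2, by rw [hswap, ((hPmem p).mp hp).2, inv_one]⟩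
    -- generic isotropy of `zpowers t ⊔ L.map P.subtype`
    have hiso : ∀ t : K, f t t = 1 → (∀ p ∈ P, f p t = 1 ∧ f t p = 1) →
        ∀ L : Subgroup ↥P, (∀ a ∈ L, ∀ b ∈ L, F a b = 1) →
        ∀ z ∈ Subgroup.zpowers t ⊔ L.map P.subtype,
          ∀ w ∈ Subgroup.zpowers t ⊔ L.map P.subtype, f z w = 1 := by
      intro t htt hPt L hL z hz w hw
      obtain ⟨z1, hz1, z2, hz2, rfl⟩ := Subgroup.mem_sup.mp hz
      obtain ⟨w1, hw1, w2, hw2, rfl⟩ := Subgroup.mem_sup.mp hw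
      obtain ⟨a, rfl⟩ := Subgroup.mem_zpowers_iff.mp hz1
      obtain ⟨b, rfl⟩ := Subgroup.mem_zpowers_iff.mp hw1
      obtain ⟨p2, hp2, rfl⟩ := Subgroup.mem_map.mp hz2
      obtain ⟨q2, hq2, rfl⟩ := Subgroup.mem_map.mp hw2
      simp only [Subgroup.coe_subtype]
      rw [hbl, hbr, hbr, f_zpow_left hbl, f_zpow_left hbl, f_zpow_right hbr, f_zpow_right hbr,
        htt, (hPt q2 q2.2).2, (hPt p2 p2.2).1,
        show f (p2 : K) (q2 : K) = F p2 q2 from rfl, hL p2 hp2 q2 hq2]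
      simp
    refine ⟨Subgroup.zpowers x ⊔ L₁.map P.subtype, Subgroup.zpowers y ⊔ L₂.map P.subtype,
      isCompl_iff.mpr ⟨?_, ?_⟩, hiso x (hskew x) hPx L₁ hL₁, hiso y (hskew y) hPy L₂ hL₂⟩
    · -- disjointness
      rw [Subgroup.disjoint_def]
      intro z hz₁ hz₂
      obtain ⟨z1, hz1, z2, hz2, hze⟩ := Subgroup.mem_sup.mp hz₁
      obtain ⟨w1, hw1, w2, hw2, hwe⟩ := Subgroup.mem_sup.mp hz₂
      obtain ⟨a, rfl⟩ := Subgroup.mem_zpowers_iff.mp hz1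
      obtain ⟨b, rfl⟩ := Subgroup.mem_zpowers_iff.mp hw1
      obtain ⟨p2, hp2, rfl⟩ := Subgroup.mem_map.mp hz2
      obtain ⟨q2, hq2, rfl⟩ := Subgroup.mem_map.mp hw2
      have hfy1 : f z y = ζ ^ a := by
        rw [← hze, hbl, f_zpow_left hbl, Subgroup.coe_subtype, (hPy p2 p2.2).1, mul_one, ← hζ]
      have hfy2 : f z y = 1 := by
        rw [← hwe, hbl, f_zpow_left hbl, hskew y, one_zpow, Subgroup.coe_subtype,
          (hPy q2 q2.2).1, mul_one]
      have hfx1 : f z x = 1 := by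
        rw [← hze, hbl, f_zpow_left hbl, hskew x, one_zpow, Subgroup.coe_subtype,
          (hPx p2 p2.2).1, mul_one]
      have hfx2 : f z x = ζ ^ (-b) := by
        rw [← hwe, hbl, f_zpow_left hbl, hswap x y, Subgroup.coe_subtype, (hPx q2 q2.2).1,
          mul_one, ← hζ]
        group
      have hxa : x ^ a = 1 := by
        have hζa : ζ ^ a = 1 := by rw [← hfy1, hfy2]
        have hdvd : ((n : ℤ)) ∣ a := by
          have := orderOf_dvd_iff_zpow_eq_one.mpr hζa
          rwa [horder] at this
        exact orderOf_dvd_iff_zpow_eq_one.mp (by rwa [hx])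
      have hyb : y ^ b = 1 := by
        have hζb : ζ ^ (-b) = 1 := by rw [← hfx2, hfx1]
        have hdvd : ((n : ℤ)) ∣ -b := by
          have := orderOf_dvd_iff_zpow_eq_one.mpr hζb
          rwa [horder] at this
        have h2 : y ^ (-b) = 1 := orderOf_dvd_iff_zpow_eq_one.mp (by rwa [hyo])
        rw [← inv_inv (y ^ b), ← zpow_neg, h2, inv_one]
      have hz2q : (p2 : K) = (q2 : K) := by
        have e1 : z = (p2 : K) := by rw [← hze, hxa, one_mul, Subgroup.coe_subtype]
        have e2 : z = (q2 : K) := by rw [← hwe, hyb, one_mul, Subgroup.coe_subtype]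
        rw [← e1, e2]
      have hpq : p2 = q2 := Subtype.ext hz2q
      have hp1 : p2 = 1 := Subgroup.disjoint_def.mp hLcompl.disjoint hp2 (hpq ▸ hq2)
      have hzp : z = (p2 : K) := by rw [← hze, hxa, one_mul, Subgroup.coe_subtype]
      rw [hzp, hp1, OneMemClass.coe_one]
    · -- codisjointness
      rw [codisjoint_iff, Subgroup.eq_top_iff']
      intro z
      obtain ⟨a, b, p, hp, rfl⟩ := hdec z
      have hsup := hLcompl.sup_eq_top
      have hpmem : (⟨p, hp⟩ : ↥P) ∈ L₁ ⊔ L₂ := by rw [hsup]; trivial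
      obtain ⟨p1, hp1, p2, hp2, hpe⟩ := Subgroup.mem_sup.mp hpmem
      have hpe' : p = (p1 : K) * (p2 : K) := by
        have := congrArg (Subtype.val) hpe
        exact this.symm
      rw [hpe']
      refine mul_mem (mul_mem ?_ ?_) (mul_mem ?_ ?_)
      · exact Subgroup.mem_sup_left (Subgroup.mem_sup_left (Subgroup.mem_zpowers_iff.mpr ⟨a, rfl⟩))
      · exact Subgroup.mem_sup_right (Subgroup.mem_sup_left (Subgroup.mem_zpowers_iff.mpr ⟨b, rfl⟩))
      · exact Subgroup.mem_sup_left (Subgroup.mem_sup_right (Subgroup.mem_map.mpr ⟨p1, hp1, rfl⟩))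
      · exact Subgroup.mem_sup_right (Subgroup.mem_sup_right (Subgroup.mem_map.mpr ⟨p2, hp2, rfl⟩))


/-- Let `K` be a finite abelian group (written multiplicatively) and `k` an
algebraically closed field whose characteristic does not divide `|K|`.  If `f : K × K → kˣ` is a
non-degenerate skew-symmetric bilinear form, then `K` admits subgroups `K₁`, `K₂` such that
`K = K₁ ⊕ K₂`, the form is trivial on each `Kᵢ`, and the induced pairing `K₁ × K₂ → kˣ` is
non-degenerate. -/
theorem stmt0 {k : Type} [Field k] [IsAlgClosed k] {K : Type} [CommGroup K] [Fintype K]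
    (hchar : ¬ (ringChar k ∣ Fintype.card K))
    (f : K → K → kˣ)
    (hbl : ∀ x y z : K, f (x * y) z = f x z * f y z)
    (hbr : ∀ x y z : K, f x (y * z) = f x y * f x z)
    (hskew : ∀ x : K, f x x = 1)
    (hnd : ∀ x : K, x ≠ 1 → ∃ y : K, f x y ≠ 1) :
    ∃ K₁ K₂ : Subgroup K,
      IsCompl K₁ K₂ ∧
      (∀ x ∈ K₁, ∀ y ∈ K₁, f x y = 1) ∧
      (∀ x ∈ K₂, ∀ y ∈ K₂, f x y = 1) ∧
      (∀ x ∈ K₁, (∀ y ∈ K₂, f x y = 1) → x = 1) ∧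
      (∀ y ∈ K₂, (∀ x ∈ K₁, f x y = 1) → y = 1) := by
  obtain ⟨K₁, K₂, hcompl, hiso₁, hiso₂⟩ :=
    stmt0Aux k (Fintype.card K) K inferInstance inferInstance le_rfl f hbl hbr hskew hnd
  have hswap := f_swap hbl hbr hskew
  have hsup : K₁ ⊔ K₂ = ⊤ := hcompl.sup_eq_top
  refine ⟨K₁, K₂, hcompl, hiso₁, hiso₂, ?_, ?_⟩
  · intro a ha hpair
    by_contra hne
    obtain ⟨w, hw⟩ := hnd a hne
    apply hw
    have hwmem : w ∈ K₁ ⊔ K₂ := by rw [hsup]; trivial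
    obtain ⟨w₁, hw₁, w₂, hw₂, rfl⟩ := Subgroup.mem_sup.mp hwmem
    rw [hbr, hiso₁ a ha w₁ hw₁, hpair w₂ hw₂, mul_one]
  · intro a ha hpair
    by_contra hne
    obtain ⟨w, hw⟩ := hnd a hne
    apply hw
    have hwmem : w ∈ K₁ ⊔ K₂ := by rw [hsup]; trivial
    obtain ⟨w₁, hw₁, w₂, hw₂, rfl⟩ := Subgroup.mem_sup.mp hwmem
    rw [hbr, hiso₂ a ha w₂ hw₂, mul_one, hswap, hpair w₁ hw₁, inv_one]
end

section
/- Let G be a central extension of k^× by a finite abelian group K whose order is invertible in k. If K' ⊆ K is a subgroup on which the commutator form [-,-]_G is identically 1, then G admits a level subgroup 𝒦 (a subgroup mapping isomorphically onto its image in K) with π(𝒦) = K'. -/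
open scoped commutatorElement

/-!
The preimage `H` of `K'` in `G` is abelian by the commutator hypothesis and contains `kˣ = ker π`.
As `kˣ` is divisible it is an injective `ℤ`-module (Baer), so `kˣ → H` has a retraction `r`;
then `ker r` is a complement of `kˣ` in `H` and `π` maps it isomorphically onto `K'`.
-/

noncomputable instance Additive.divisibleByInt {A : Type*} [CommGroup A] [RootableBy A ℤ] :
    DivisibleBy (Additive A) ℤ where
  div a n := Additive.ofMul (RootableBy.root a.toMul n)
  div_zero _ := congrArg Additive.ofMul (RootableBy.root_zero _)
  div_cancel a hn := congrArg Additive.ofMul (RootableBy.root_cancel a.toMul hn)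

theorem MonoidHom.exists_leftInverse_of_injective {A B : Type*} [CommGroup A] [CommGroup B]
    [RootableBy A ℤ] (f : A →* B) (hf : Function.Injective f) :
    ∃ r : B →* A, Function.LeftInverse r f := by
  obtain ⟨r, hr⟩ := (Module.Baer.of_divisible (Additive A)).extension_property_addMonoidHom
    f.toAdditive hf (AddMonoidHom.id _)
  exact ⟨MonoidHom.toAdditive.symm r, fun a => congrArg Additive.toMul (DFunLike.congr_fun hr a)⟩

theorem IsAlgClosed.units_pow_surjective {k : Type*} [Field k] [IsAlgClosed k] {n : ℕ}
    (hn : n ≠ 0) : Function.Surjective fun a : kˣ => a ^ n := by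
  intro a
  obtain ⟨z, hz⟩ := IsAlgClosed.exists_pow_nat_eq (a : k) (Nat.pos_of_ne_zero hn)
  have hz0 : z ≠ 0 := by
    rintro rfl
    exact a.ne_zero (by rw [← hz, zero_pow hn])
  exact ⟨Units.mk0 z hz0, Units.ext hz⟩

noncomputable instance IsAlgClosed.unitsRootableByNat {k : Type*} [Field k] [IsAlgClosed k] :
    RootableBy kˣ ℕ :=
  rootableByOfPowLeftSurj _ _ IsAlgClosed.units_pow_surjective

noncomputable instance IsAlgClosed.unitsRootableByInt {k : Type*} [Field k] [IsAlgClosed k] :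
    RootableBy kˣ ℤ :=
  Group.rootableByIntOfRootableByNat _

theorem exists_injOn_map_eq_range_of_injective_of_ker_eq_range {A G K : Type*} [CommGroup A]
    [RootableBy A ℤ] [CommGroup G] [Group K] (ι : A →* G) (π : G →* K)
    (hinj : Function.Injective ι) (hexact : π.ker = ι.range) :
    ∃ L : Subgroup G, Set.InjOn π L ∧ L.map π = π.range := by
  obtain ⟨r, hr⟩ := ι.exists_leftInverse_of_injective hinj
  refine ⟨r.ker, fun x hx y hy hxy => ?_, le_antisymm (Subgroup.map_le_range _ _) ?_⟩
  · obtain ⟨a, ha⟩ : x / y ∈ ι.range := by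
      rw [← hexact, MonoidHom.mem_ker, map_div, hxy, div_self']
    have ha1 : a = 1 := by
      rw [← hr a, ha, map_div, MonoidHom.mem_ker.mp hx, MonoidHom.mem_ker.mp hy, div_one]
    rwa [ha1, map_one, eq_comm, div_eq_one] at ha
  · rintro _ ⟨g, rfl⟩
    have hπι : π (ι (r g)) = 1 := by
      rw [← MonoidHom.mem_ker, hexact]
      exact ⟨_, rfl⟩
    refine ⟨g / ι (r g), ?_, by rw [map_div, hπι, div_one]⟩
    rw [SetLike.mem_coe, MonoidHom.mem_ker, map_div, hr, div_self']

theorem stmt3_general {k : Type} [Field k] [IsAlgClosed k] {K : Type} [CommGroup K]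
    {G : Type} [Group G]
    (ι : kˣ →* G) (π : G →* K)
    (hinj : Function.Injective ι) (hsurj : Function.Surjective π)
    (hexact : π.ker = ι.range)
    (K' : Subgroup K)
    (htriv : ∀ a b : G, π a ∈ K' → π b ∈ K' → ⁅a, b⁆ = 1) :
    ∃ 𝒦 : Subgroup G, Set.InjOn π 𝒦 ∧ 𝒦.map π = K' := by
  set H := K'.comap π
  let : CommGroup H :=
    { mul_comm := fun a b =>
        Subtype.ext (commutatorElement_eq_one_iff_mul_comm.mp (htriv a b a.2 b.2)) }
  have hιH (a : kˣ) : ι a ∈ H := by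
    have : ι a ∈ π.ker := hexact ▸ ⟨a, rfl⟩
    simp [H, MonoidHom.mem_ker.mp this]
  obtain ⟨L, hLinj, hLmap⟩ := exists_injOn_map_eq_range_of_injective_of_ker_eq_range
    (ι.codRestrict H hιH) (π.comp H.subtype) (fun a b h => hinj (congrArg Subtype.val h))
    (by
      ext x
      rw [MonoidHom.mem_ker, MonoidHom.comp_apply, ← MonoidHom.mem_ker, hexact]
      simp [← Subtype.val_inj])
  refine ⟨L.map H.subtype, ?_, ?_⟩
  · rintro _ ⟨x, hx, rfl⟩ _ ⟨y, hy, rfl⟩ hxy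
    exact congrArg Subtype.val (hLinj hx hy hxy)
  · rw [Subgroup.map_map, hLmap, MonoidHom.range_comp, Subgroup.range_subtype,
      Subgroup.map_comap_eq_self_of_surjective hsurj]

/-- Let `1 → kˣ →ι G →π K → 0` be a central extension of `kˣ` by a finite
abelian group `K` whose order is invertible in `k` (`k` algebraically closed).  If `K'` is a
subgroup of `K` on which the commutator form is identically `1` (i.e. any two elements of `G`
lying over `K'` commute), then `G` admits a level subgroup `𝒦` (a subgroup on which `π` is
injective) with `π(𝒦) = K'`. -/
theorem stmt3 {k : Type} [Field k] [IsAlgClosed k] {K : Type} [CommGroup K] [Finite K]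
    {G : Type} [Group G]
    (hchar : ¬ (ringChar k ∣ Nat.card K))
    (ι : kˣ →* G) (π : G →* K)
    (hinj : Function.Injective ι) (hsurj : Function.Surjective π)
    (hexact : π.ker = ι.range)
    (hcentral : ι.range ≤ Subgroup.center G)
    (K' : Subgroup K)
    (htriv : ∀ a b : G, π a ∈ K' → π b ∈ K' → ⁅a, b⁆ = 1) :
    ∃ 𝒦 : Subgroup G, Set.InjOn π 𝒦 ∧ 𝒦.map π = K' :=
  stmt3_general ι π hinj hsurj hexact K' htriv
end

section
/- Let G be a non-degenerate central extension of k^× by a finite abelian group K. Then there are subgroups K₁, K₂ of K with K = K₁ ⊕ K₂, the commutator form trivial on each Kᵢ, the pairing ⟨-,-⟩ : K₁ × K₂ → k^×, (x₁,x₂) ↦ [x₁,x₂]_G, non-degenerate, and G is equivalent (as a central extension of k^× by K) to the group G_⟨-,-⟩ with underlying set k^× × K₁ × K₂ and multiplication (α,x₁,x₂)·(β,y₁,y₂) = (αβ⟨x₁,y₂⟩, x₁+y₁, x₂+y₂). -/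
/-!
The commutator form `c` is a non-degenerate alternating bimultiplicative form on `K` with values
in `kˣ`. Take `x` of maximal order `n = exp K`; the values of `c x -` form a finite, hence cyclic,
subgroup of `kˣ`, and non-degeneracy forces its order to be `n`, so some `ζ = c x y` is a
primitive `n`-th root of unity. Every value of `c` is then a power of `ζ`, which splits
`K = ⟨x⟩ ⊕ ⟨y⟩ ⊕ W` with `W` the orthogonal of `x` and `y`; by induction `W` is a sum of two
isotropic subgroups, and adding `x` to one and `y` to the other gives `K = K₁ ⊕ K₂`.

Over an isotropic `Kᵢ` the preimage in `G` is abelian, and since `kˣ` is divisible each generator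
of `Kᵢ` lifts to an element whose order divides the generator's; these lifts define a homomorphic
section `sᵢ : Kᵢ →* G`. The required bijection is `(α, x₁, x₂) ↦ ι α * s₂ x₂ * s₁ x₁`: the
twist `c x₁ y₂` is the commutator picked up when `s₁ x₁` is moved past `s₂ y₂`.
-/

open Subgroup
open scoped commutatorElement

namespace MonoidHom

section Orthogonal

variable {K M : Type*} [CommGroup K] [CommGroup M] (B : K →* K →* M)

def IsAlt : Prop := ∀ x, B x x = 1

def orthogonal (H : Subgroup K) : Subgroup K := (B.compl₂ H.subtype).ker

variable {B}

theorem mem_orthogonal {H : Subgroup K} {a : K} :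
    a ∈ B.orthogonal H ↔ ∀ b ∈ H, B a b = 1 := by
  simp [orthogonal, MonoidHom.ext_iff]

theorem mem_orthogonal_iff_le_ker {H : Subgroup K} {a : K} :
    a ∈ B.orthogonal H ↔ H ≤ (B a).ker :=
  mem_orthogonal

theorem mem_orthogonal_zpowers {x a : K} : a ∈ B.orthogonal (zpowers x) ↔ B a x = 1 := by
  rw [mem_orthogonal_iff_le_ker, zpowers_le, mem_ker]

theorem orthogonal_sup (H₁ H₂ : Subgroup K) :
    B.orthogonal (H₁ ⊔ H₂) = B.orthogonal H₁ ⊓ B.orthogonal H₂ := by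
  ext a
  simp only [mem_inf, mem_orthogonal_iff_le_ker, sup_le_iff]

theorem orthogonal_anti {H H' : Subgroup K} (h : H ≤ H') : B.orthogonal H' ≤ B.orthogonal H :=
  fun _ ha ↦ mem_orthogonal_iff_le_ker.mpr (h.trans (mem_orthogonal_iff_le_ker.mp ha))

theorem orthogonal_top_eq_bot (hB : Function.Injective B) : B.orthogonal ⊤ = ⊥ := by
  ext a
  rw [mem_orthogonal_iff_le_ker, top_le_iff, ker_eq_top_iff, mem_bot, ← hB.eq_iff, map_one]

theorem IsAlt.apply_swap (hB : B.IsAlt) (x y : K) : B y x = (B x y)⁻¹ := by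
  rw [eq_inv_iff_mul_eq_one, ← hB (x * y)]
  simp [hB x, hB y, mul_comm]

theorem le_orthogonal_iff {H₁ H₂ : Subgroup K} :
    H₁ ≤ B.orthogonal H₂ ↔ ∀ a ∈ H₁, ∀ b ∈ H₂, B a b = 1 := by
  simp only [SetLike.le_def, mem_orthogonal]

theorem IsAlt.le_orthogonal_comm (hB : B.IsAlt) {H₁ H₂ : Subgroup K} :
    H₁ ≤ B.orthogonal H₂ ↔ H₂ ≤ B.orthogonal H₁ := by
  have swap {H H' : Subgroup K} (h : ∀ a ∈ H, ∀ b ∈ H', B a b = 1) :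
      ∀ b ∈ H', ∀ a ∈ H, B b a = 1 :=
    fun b hb a ha ↦ by rw [hB.apply_swap, h a ha b hb, inv_one]
  simp only [le_orthogonal_iff]
  exact ⟨swap, swap⟩

theorem IsAlt.mem_orthogonal_iff_swap (hB : B.IsAlt) {H : Subgroup K} {a : K} :
    a ∈ B.orthogonal H ↔ ∀ b ∈ H, B b a = 1 := by
  simp only [mem_orthogonal, hB.apply_swap _ a, inv_eq_one]

theorem disjoint_orthogonal_of_isCompl (hB : Function.Injective B) {H₁ H₂ : Subgroup K}
    (hH : IsCompl H₁ H₂) (h₁ : H₁ ≤ B.orthogonal H₁) : Disjoint H₁ (B.orthogonal H₂) :=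
  disjoint_iff_inf_le.mpr <| (inf_le_inf_right _ h₁).trans <| by
    rw [← orthogonal_sup, hH.sup_eq_top, orthogonal_top_eq_bot hB]

theorem IsAlt.zpowers_le_orthogonal (hB : B.IsAlt) (x : K) :
    zpowers x ≤ B.orthogonal (zpowers x) := by
  rw [zpowers_le, mem_orthogonal_zpowers, hB]

def restrict₂ (H : Subgroup K) : H →* H →* M := (B.compl₂ H.subtype).comp H.subtype

theorem IsAlt.restrict₂ (hB : B.IsAlt) (H : Subgroup K) : (B.restrict₂ H).IsAlt :=
  fun a ↦ hB a

theorem injective_restrict₂ (hB : Function.Injective B) {H H' : Subgroup K} (hH : H' ⊔ H = ⊤)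
    (hle : H ≤ B.orthogonal H') : Function.Injective (B.restrict₂ H) := by
  refine (injective_iff_map_eq_one _).mpr fun a ha ↦ Subtype.ext ?_
  have : (a : K) ∈ B.orthogonal H' ⊓ B.orthogonal H :=
    ⟨hle a.2, mem_orthogonal.mpr fun b hb ↦ congrArg (· ⟨b, hb⟩) ha⟩
  rwa [← orthogonal_sup, hH, orthogonal_top_eq_bot hB] at this

theorem map_subtype_le_orthogonal {H : Subgroup K} {H' : Subgroup H}
    (h : H' ≤ (B.restrict₂ H).orthogonal H') :
    H'.map H.subtype ≤ B.orthogonal (H'.map H.subtype) := by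
  rw [le_orthogonal_iff] at h ⊢
  rintro _ ⟨a, ha, rfl⟩ _ ⟨b, hb, rfl⟩
  exact h a ha b hb

theorem IsAlt.sup_le_orthogonal_sup (hB : B.IsAlt) {H₁ H₂ : Subgroup K}
    (h₁ : H₁ ≤ B.orthogonal H₁) (h₂ : H₂ ≤ B.orthogonal H₂) (h₁₂ : H₁ ≤ B.orthogonal H₂) :
    H₁ ⊔ H₂ ≤ B.orthogonal (H₁ ⊔ H₂) := by
  rw [orthogonal_sup]
  exact sup_le (le_inf h₁ h₁₂) (le_inf (hB.le_orthogonal_comm.mp h₁₂) h₂)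

end Orthogonal

section Hyperbolic

variable {K M : Type*} [CommGroup K] [CommGroup M] {B : K →* K →* M} {x y : K}

theorem zpow_eq_one_of_apply_zpow_eq_one (hxy : orderOf (B x y) = Monoid.exponent K) {a : ℤ}
    (h : B x y ^ a = 1) (z : K) : z ^ a = 1 := by
  rw [← orderOf_dvd_iff_zpow_eq_one, hxy] at h
  exact orderOf_dvd_iff_zpow_eq_one.mp
    ((Int.natCast_dvd_natCast.mpr (Monoid.order_dvd_exponent z)).trans h)

theorem IsAlt.disjoint_zpowers_sup_orthogonal (hB : B.IsAlt)
    (hxy : orderOf (B x y) = Monoid.exponent K) :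
    Disjoint (zpowers x) (zpowers y ⊔ B.orthogonal (zpowers x ⊔ zpowers y)) := by
  rw [disjoint_def]
  rintro _ ⟨a, rfl⟩ h
  obtain ⟨_, ⟨b, rfl⟩, w, hw, hxa⟩ := mem_sup.mp h
  rw [orthogonal_sup, mem_inf, mem_orthogonal_zpowers, mem_orthogonal_zpowers] at hw
  refine zpow_eq_one_of_apply_zpow_eq_one hxy ?_ x
  have := congrArg (B · y) hxa
  simp only [map_mul, map_zpow, mul_apply, zpow_apply, hB y, hw.2, one_zpow, mul_one] at this
  exact this.symm

theorem IsAlt.orderOf_apply_swap (hB : B.IsAlt) (hxy : orderOf (B x y) = Monoid.exponent K) :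
    orderOf (B y x) = Monoid.exponent K := by
  rw [hB.apply_swap, orderOf_inv, hxy]

theorem IsAlt.isCompl_sup_sup (hB : B.IsAlt) (hxy : orderOf (B x y) = Monoid.exponent K)
    (htop : zpowers x ⊔ zpowers y ⊔ B.orthogonal (zpowers x ⊔ zpowers y) = ⊤)
    {W₁ W₂ : Subgroup K} (hW : W₁ ⊔ W₂ = B.orthogonal (zpowers x ⊔ zpowers y))
    (hW₁₂ : Disjoint W₁ W₂) : IsCompl (zpowers x ⊔ W₁) (zpowers y ⊔ W₂) := by
  set W := B.orthogonal (zpowers x ⊔ zpowers y)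
  have hX : Disjoint (zpowers x) (zpowers y ⊔ W) := hB.disjoint_zpowers_sup_orthogonal hxy
  have hY : Disjoint (zpowers y) W := by
    have := hB.disjoint_zpowers_sup_orthogonal (hB.orderOf_apply_swap hxy)
    rw [sup_comm (zpowers y)] at this
    exact this.mono_right le_sup_right
  constructor
  · have h₁ : Disjoint W₁ (W₂ ⊔ zpowers y) :=
      hW₁₂.disjoint_sup_right_of_disjoint_sup_left (hW ▸ hY.symm)
    have h₂ : Disjoint (W₂ ⊔ zpowers y ⊔ W₁) (zpowers x) :=
      hX.symm.mono_left (by rw [← hW]; exact le_of_eq (by ac_rfl))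
    have := (h₁.symm.disjoint_sup_right_of_disjoint_sup_left h₂).symm
    rwa [sup_comm W₁, sup_comm W₂] at this
  · rw [codisjoint_iff, sup_sup_sup_comm, hW, htop]

end Hyperbolic

section Domain

variable {R K : Type*} [CommRing R] [IsDomain R] [CommGroup K] [Finite K] {B : K →* K →* Rˣ}

theorem exists_orderOf_apply_eq_exponent (hB : Function.Injective B) :
    ∃ x y : K, orderOf (B x y) = Monoid.exponent K := by
  obtain ⟨x, hx⟩ := Monoid.exists_orderOf_eq_exponent (Monoid.ExponentExists.of_finite (G := K))
  have : Finite (B x).range := Finite.of_surjective _ (B x).rangeRestrict_surjective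
  have := isCyclic_subgroup_units (B x).range
  obtain ⟨⟨_, y, rfl⟩, hy⟩ := IsCyclic.exists_generator (α := (B x).range)
  refine ⟨x, y, Nat.dvd_antisymm ?_ ?_⟩
  · rw [← hx]
    apply orderOf_dvd_of_pow_eq_one
    rw [← pow_apply, ← map_pow, pow_orderOf_eq_one, map_one, one_apply]
  · rw [← hx, ← orderOf_injective B hB]
    apply orderOf_dvd_of_pow_eq_one
    ext1 u
    obtain ⟨m, hm⟩ := mem_zpowers_iff.mp (hy ⟨B x u, u, rfl⟩)
    have hm : B x y ^ m = B x u := congrArg Subtype.val hm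
    rw [pow_apply, one_apply, ← hm, ← zpow_natCast, ← zpow_mul, mul_comm, zpow_mul, zpow_natCast,
      pow_orderOf_eq_one, one_zpow]

variable {x y : K}

theorem apply_mem_zpowers (hxy : orderOf (B x y) = Monoid.exponent K) (u v : K) :
    B u v ∈ zpowers (B x y) := by
  have hζ : IsPrimitiveRoot (B x y) (Monoid.exponent K) := hxy ▸ IsPrimitiveRoot.orderOf _
  rw [hζ.zpowers_eq, mem_rootsOfUnity, ← pow_apply, ← map_pow,
    Monoid.pow_exponent_eq_one, map_one, one_apply]

theorem IsAlt.sup_orthogonal_eq_top (hB : B.IsAlt) (hxy : orderOf (B x y) = Monoid.exponent K) :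
    zpowers x ⊔ zpowers y ⊔ B.orthogonal (zpowers x ⊔ zpowers y) = ⊤ := by
  refine eq_top_iff.mpr fun u _ ↦ ?_
  obtain ⟨a, ha⟩ := mem_zpowers_iff.mp (apply_mem_zpowers hxy u y)
  obtain ⟨b, hb⟩ := mem_zpowers_iff.mp (apply_mem_zpowers hxy x u)
  have hw : (x ^ a * y ^ b)⁻¹ * u ∈ B.orthogonal (zpowers x ⊔ zpowers y) := by
    rw [orthogonal_sup, mem_inf, mem_orthogonal_zpowers, mem_orthogonal_zpowers]
    simp [hB x, hB y, hB.apply_swap x y, hB.apply_swap x u, ha, hb]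
  rw [← mul_inv_cancel_left (x ^ a * y ^ b) u]
  exact mul_mem (mem_sup_left (mul_mem (mem_sup_left (zpow_mem (mem_zpowers x) a))
    (mem_sup_right (zpow_mem (mem_zpowers y) b)))) (mem_sup_right hw)

theorem IsAlt.exists_isCompl_le_orthogonal (hB : B.IsAlt) (hnd : Function.Injective B) :
    ∃ K₁ K₂ : Subgroup K, IsCompl K₁ K₂ ∧ K₁ ≤ B.orthogonal K₁ ∧ K₂ ≤ B.orthogonal K₂ := by
  induction h : Nat.card K using Nat.strong_induction_on generalizing K with
  | _ n ih =>
  rcases subsingleton_or_nontrivial K with hK | hK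
  · exact ⟨⊥, ⊤, isCompl_bot_top, bot_le, fun a _ ↦ Subsingleton.elim a 1 ▸ one_mem _⟩
  obtain ⟨x, y, hxy⟩ := exists_orderOf_apply_eq_exponent hnd
  set W := B.orthogonal (zpowers x ⊔ zpowers y)
  have htop : zpowers x ⊔ zpowers y ⊔ W = ⊤ := hB.sup_orthogonal_eq_top hxy
  have hxW : x ∉ W := fun hx ↦ (Monoid.one_lt_exponent (G := K)).ne' <| hxy.symm.trans <|
    orderOf_eq_one_iff.mpr (mem_orthogonal.mp hx y (mem_sup_right (mem_zpowers y)))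
  have hcard : Nat.card W < n :=
    h ▸ (card_le_card_group W).lt_of_ne fun hW ↦ hxW ((card_eq_iff_eq_top W).mp hW ▸ mem_top x)
  obtain ⟨W₁, W₂, hW₁₂, hW₁, hW₂⟩ := ih _ hcard (hB.restrict₂ W)
    (injective_restrict₂ hnd htop le_rfl) rfl
  refine ⟨zpowers x ⊔ W₁.map W.subtype, zpowers y ⊔ W₂.map W.subtype,
    hB.isCompl_sup_sup hxy htop ?_ (disjoint_map W.subtype_injective hW₁₂.disjoint), ?_, ?_⟩
  · rw [← Subgroup.map_sup, hW₁₂.sup_eq_top, ← range_eq_map, range_subtype]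
  · exact hB.sup_le_orthogonal_sup (hB.zpowers_le_orthogonal x) (map_subtype_le_orthogonal hW₁)
      (hB.le_orthogonal_comm.mp ((map_subtype_le _).trans (orthogonal_anti le_sup_left)))
  · exact hB.sup_le_orthogonal_sup (hB.zpowers_le_orthogonal y) (map_subtype_le_orthogonal hW₂)
      (hB.le_orthogonal_comm.mp ((map_subtype_le _).trans (orthogonal_anti le_sup_right)))

end Domain

end MonoidHom

theorem IsAlgClosed.exists_units_pow_eq {k : Type*} [Field k] [IsAlgClosed k] (α : kˣ) {n : ℕ}
    (hn : n ≠ 0) : ∃ β : kˣ, β ^ n = α := by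
  obtain ⟨z, hz⟩ := IsAlgClosed.exists_pow_nat_eq (α : k) (Nat.pos_of_ne_zero hn)
  have hz0 : z ≠ 0 := by rintro rfl; exact α.ne_zero (by rw [← hz, zero_pow hn])
  exact ⟨Units.mk0 z hz0, Units.ext hz⟩

theorem ZMod.mem_zpowers_ofAdd_one {n : ℕ} (x : Multiplicative (ZMod n)) :
    x ∈ zpowers (Multiplicative.ofAdd 1) := by
  obtain ⟨m, hm⟩ := ZMod.intCast_surjective x.toAdd
  exact ⟨m, show _ ^ m = x by rw [← ofAdd_zsmul, zsmul_one, hm]; rfl⟩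

theorem ZMod.orderOf_ofAdd_one (n : ℕ) : orderOf (Multiplicative.ofAdd (1 : ZMod n)) = n := by
  rw [orderOf_ofAdd_eq_addOrderOf, ZMod.addOrderOf_one]

section CommutatorCentral

variable {G : Type*} [Group G]

theorem commutatorElement_mul_left_of_mem_center (h : ∀ a b : G, ⁅a, b⁆ ∈ center G)
    (a a' b : G) : ⁅a * a', b⁆ = ⁅a, b⁆ * ⁅a', b⁆ := by
  rw [commutatorElement_mul_left_eq_conj_mul, mem_center_iff.mp (h a' b) a, mul_inv_cancel_right,
    mem_center_iff.mp (h a' b)]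

theorem commutatorElement_mul_right_of_mem_center (h : ∀ a b : G, ⁅a, b⁆ ∈ center G)
    (a b b' : G) : ⁅a, b * b'⁆ = ⁅a, b⁆ * ⁅a, b'⁆ := by
  rw [commutatorElement_mul_right_eq_mul_conj, mul_assoc _ b, mem_center_iff.mp (h a b') b,
    mul_assoc, mul_inv_cancel_right]

end CommutatorCentral

namespace CentralExtension

section CommutatorForm

variable {A G K : Type*} [CommGroup A] [Group G] [CommGroup K] {ι : A →* G} {π : G →* K}
  {c : K → K → A}

theorem commute_of_form_eq_one (hc : ∀ a b : G, ι (c (π a) (π b)) = ⁅a, b⁆) {a b : G}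
    (h : c (π a) (π b) = 1) : Commute a b :=
  commutatorElement_eq_one_iff_commute.mp (by rw [← hc, h, map_one])

theorem form_mul_left (hinj : Function.Injective ι) (hsurj : Function.Surjective π)
    (hcent : ι.range ≤ center G) (hc : ∀ a b : G, ι (c (π a) (π b)) = ⁅a, b⁆) (x y z : K) :
    c (x * y) z = c x z * c y z := by
  obtain ⟨⟨a, rfl⟩, ⟨a', rfl⟩, ⟨b, rfl⟩⟩ := And.intro (hsurj x) (And.intro (hsurj y) (hsurj z))
  apply hinj
  rw [map_mul, ← map_mul, hc, hc, hc,
    commutatorElement_mul_left_of_mem_center fun a b ↦ hcent ⟨_, hc a b⟩]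

theorem form_mul_right (hinj : Function.Injective ι) (hsurj : Function.Surjective π)
    (hcent : ι.range ≤ center G) (hc : ∀ a b : G, ι (c (π a) (π b)) = ⁅a, b⁆) (x y z : K) :
    c x (y * z) = c x y * c x z := by
  obtain ⟨⟨a, rfl⟩, ⟨b, rfl⟩, ⟨b', rfl⟩⟩ := And.intro (hsurj x) (And.intro (hsurj y) (hsurj z))
  apply hinj
  rw [map_mul, ← map_mul, hc, hc, hc,
    commutatorElement_mul_right_of_mem_center fun a b ↦ hcent ⟨_, hc a b⟩]

def commutatorForm (hinj : Function.Injective ι) (hsurj : Function.Surjective π)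
    (hcent : ι.range ≤ center G) (hc : ∀ a b : G, ι (c (π a) (π b)) = ⁅a, b⁆) : K →* K →* A :=
  MonoidHom.mk' (fun x ↦ MonoidHom.mk' (c x) (form_mul_right hinj hsurj hcent hc x))
    fun x y ↦ MonoidHom.ext (form_mul_left hinj hsurj hcent hc x y)

variable (hinj : Function.Injective ι) (hsurj : Function.Surjective π)
  (hcent : ι.range ≤ center G) (hc : ∀ a b : G, ι (c (π a) (π b)) = ⁅a, b⁆)

theorem commutatorForm_apply (x y : K) : commutatorForm hinj hsurj hcent hc x y = c x y := rfl

theorem isAlt_commutatorForm : (commutatorForm hinj hsurj hcent hc).IsAlt := fun x ↦ by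
  obtain ⟨a, rfl⟩ := hsurj x
  apply hinj
  rw [commutatorForm_apply, hc, commutatorElement_self, map_one]

theorem injective_commutatorForm (hcenter : center G ≤ ι.range) (hexact : ι.range ≤ π.ker) :
    Function.Injective (commutatorForm hinj hsurj hcent hc) := by
  refine (injective_iff_map_eq_one _).mpr fun x hx ↦ ?_
  obtain ⟨a, rfl⟩ := hsurj x
  have ha : a ∈ center G := mem_center_iff.mpr fun g ↦ (commute_of_form_eq_one hc (by
    rw [← commutatorForm_apply hinj hsurj hcent hc, hx, MonoidHom.one_apply])).symm.eq
  exact hexact (hcenter ha)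

end CommutatorForm

section Extension

variable {A G K : Type*} [CommGroup A] [Group G] [CommGroup K] {ι : A →* G} {π : G →* K}

theorem proj_incl_eq_one (hexact : π.ker = ι.range) (a : A) : π (ι a) = 1 :=
  (hexact ▸ ⟨a, rfl⟩ : ι a ∈ π.ker)

theorem commute_incl (hcent : ι.range ≤ center G) (a : A) (g : G) : Commute (ι a) g :=
  (mem_center_iff.mp (hcent ⟨a, rfl⟩) g).symm

theorem bijective_mul_of_bijective_comp (hinj : Function.Injective ι) (hexact : π.ker = ι.range)
    {X : Type*} {τ : X → G} (hτ : Function.Bijective (π ∘ τ)) :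
    Function.Bijective fun p : A × X ↦ ι p.1 * τ p.2 := by
  constructor
  · rintro ⟨a, x⟩ ⟨b, y⟩ h
    obtain rfl : x = y := hτ.1 (by simpa [proj_incl_eq_one hexact] using congrArg π h)
    simpa [hinj.eq_iff] using h
  · intro g
    obtain ⟨x, hx⟩ := hτ.2 (π g)
    obtain ⟨a, ha⟩ : g * (τ x)⁻¹ ∈ ι.range := by
      rw [← hexact, MonoidHom.mem_ker, map_mul, map_inv, ← Function.comp_apply (f := π), hx,
        mul_inv_cancel]
    exact ⟨(a, x), by simp [ha]⟩

theorem mul_mul_mul_of_commutator (hcent : ι.range ≤ center G) {a₁ a₂ b₁ b₂ : G} {γ : A}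
    (h : a₁ * b₂ = ι γ * (b₂ * a₁)) (α β : A) :
    ι α * (b₁ * a₁) * (ι β * (b₂ * a₂)) = ι (α * β * γ) * (b₁ * b₂ * (a₁ * a₂)) := by
  calc ι α * (b₁ * a₁) * (ι β * (b₂ * a₂)) = ι α * ι β * (b₁ * (a₁ * b₂) * a₂) := by
        rw [mul_assoc (ι α), ← mul_assoc (b₁ * a₁), ← (commute_incl hcent β _).eq]
        simp only [mul_assoc]
    _ = ι α * ι β * (b₁ * ι γ * (b₂ * a₁) * a₂) := by rw [h]; simp only [mul_assoc]
    _ = _ := by rw [← (commute_incl hcent γ b₁).eq]; simp only [map_mul, mul_assoc]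

theorem exists_equiv_twisted_prod (hinj : Function.Injective ι) (hexact : π.ker = ι.range)
    (hcent : ι.range ≤ center G) {c : K → K → A} (hc : ∀ a b : G, ι (c (π a) (π b)) = ⁅a, b⁆)
    {K₁ K₂ : Subgroup K} (hK : IsCompl K₁ K₂) {s₁ : K₁ →* G} {s₂ : K₂ →* G}
    (hs₁ : ∀ q, π (s₁ q) = q) (hs₂ : ∀ q, π (s₂ q) = q) :
    ∃ e : G ≃ A × K₁ × K₂,
      (∀ g h : G, e (g * h) = ((e g).1 * (e h).1 * c ((e g).2.1 : K) ((e h).2.2 : K),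
        (e g).2.1 * (e h).2.1, (e g).2.2 * (e h).2.2)) ∧
      (∀ α : A, e (ι α) = (α, 1, 1)) ∧
      (∀ g : G, π g = ((e g).2.1 : K) * ((e g).2.2 : K)) := by
  set E : A × K₁ × K₂ → G := fun p ↦ ι p.1 * (s₂ p.2.2 * s₁ p.2.1)
  have hπE (p : A × K₁ × K₂) : π (E p) = p.2.1 * p.2.2 := by
    simp [E, proj_incl_eq_one hexact, hs₁, hs₂, mul_comm]
  have hcompl : IsComplement' K₁ K₂ := isComplement'_of_disjoint_and_mul_eq_univ hK.disjoint
    (by rw [← mul_normal, hK.sup_eq_top, coe_top])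
  have hE : Function.Bijective E := bijective_mul_of_bijective_comp hinj hexact
    (τ := fun x : K₁ × K₂ ↦ s₂ x.2 * s₁ x.1) (by
      convert (isComplement_iff_bijective K₁ K₂).mp hcompl using 1
      ext x
      simp [hs₁, hs₂, mul_comm])
  have hEmul (p q : A × K₁ × K₂) :
      E p * E q = E (p.1 * q.1 * c p.2.1 q.2.2, p.2.1 * q.2.1, p.2.2 * q.2.2) := by
    refine (mul_mul_mul_of_commutator hcent (γ := c p.2.1 q.2.2) ?_ _ _).trans (by simp [E])
    rw [← hs₁ p.2.1, ← hs₂ q.2.2, hc, commutatorElement_def]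
    group
  set F := Equiv.ofBijective E hE
  refine ⟨F.symm, fun g h ↦ ?_, fun α ↦ ?_, fun g ↦ ?_⟩
  · rw [Equiv.symm_apply_eq, Equiv.ofBijective_apply, ← hEmul]
    exact congrArg₂ (· * ·) (F.apply_symm_apply g).symm (F.apply_symm_apply h).symm
  · rw [Equiv.symm_apply_eq, Equiv.ofBijective_apply]
    simp [E]
  · conv_lhs => rw [← F.apply_symm_apply g]
    exact hπE _

end Extension

section Section

variable {k G K : Type*} [Field k] [IsAlgClosed k] [Group G] [CommGroup K] {ι : kˣ →* G}
  {π : G →* K}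

theorem exists_lift_pow_eq_one (hexact : π.ker = ι.range) {g : G}
    (hcomm : ∀ α, Commute (ι α) g) {n : ℕ} (hn : n ≠ 0) (hg : π g ^ n = 1) :
    ∃ b, π b = π g ∧ b ^ n = 1 := by
  obtain ⟨α, hα⟩ : g ^ n ∈ ι.range := by rw [← hexact, MonoidHom.mem_ker, map_pow, hg]
  obtain ⟨β, rfl⟩ := IsAlgClosed.exists_units_pow_eq α hn
  refine ⟨g * (ι β)⁻¹, ?_, ?_⟩
  · rw [map_mul, map_inv, proj_incl_eq_one hexact, inv_one, mul_one]
  · rw [((hcomm β).symm.inv_right).mul_pow, inv_pow, ← map_pow, hα, mul_inv_cancel]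

theorem exists_monoidHom_section (hsurj : Function.Surjective π) (hexact : π.ker = ι.range)
    (Q : Subgroup K) [Finite Q] (hQ : ∀ a b : G, π a ∈ Q → π b ∈ Q → Commute a b) :
    ∃ s : Q →* G, ∀ q, π (s q) = q := by
  classical
  obtain ⟨I, _, n, hn, ⟨φ⟩⟩ := CommGroup.equiv_prod_multiplicative_zmod_of_finite Q
  set e : ∀ i, Q := fun i ↦ φ.symm (Pi.mulSingle i (.ofAdd 1))
  have he i : orderOf (e i) = n i := by simp [e, MulEquiv.orderOf_eq, orderOf_piMulSingle]
  have hlift i : ∃ b, π b = e i ∧ b ^ n i = 1 := by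
    obtain ⟨g, hg⟩ := hsurj (e i)
    rw [← hg]
    refine exists_lift_pow_eq_one hexact (fun α ↦ hQ _ _ ?_ (hg ▸ (e i).2))
      (by have := hn i; omega) ?_
    · rw [proj_incl_eq_one hexact]; exact one_mem Q
    · rw [hg, ← coe_pow, ← he i, pow_orderOf_eq_one, coe_one]
  choose b hb using hlift
  let ψ i : Multiplicative (ZMod (n i)) →* G :=
    monoidHomOfForallMemZpowers ZMod.mem_zpowers_ofAdd_one (g' := b i)
      (by rw [ZMod.orderOf_ofAdd_one]; exact orderOf_dvd_of_pow_eq_one (hb i).2)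
  have hψ i x : π (ψ i x) = φ.symm (Pi.mulSingle i x) := by
    have : π.comp (ψ i) = Q.subtype.comp (φ.symm.toMonoidHom.comp
        (MonoidHom.mulSingle (fun i ↦ Multiplicative (ZMod (n i))) i)) :=
      (MonoidHom.eq_iff_eq_on_generator ZMod.mem_zpowers_ofAdd_one _ _).mpr
        (by simp [ψ, (hb i).1, e])
    exact DFunLike.congr_fun this x
  have hcomm : Pairwise fun i j ↦ ∀ x y, Commute (ψ i x) (ψ j y) :=
    fun i j _ x y ↦ hQ _ _ (hψ i x ▸ SetLike.coe_mem _) (hψ j y ▸ SetLike.coe_mem _)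
  let Ψ := MonoidHom.noncommPiCoprod ψ hcomm
  have hΨ : π.comp Ψ = Q.subtype.comp φ.symm.toMonoidHom := MonoidHom.pi_ext fun i x ↦ by
    simp only [Ψ, MonoidHom.comp_apply]
    rw [MonoidHom.noncommPiCoprod_mulSingle]
    exact hψ i x
  refine ⟨Ψ.comp φ.toMonoidHom, fun q ↦ ?_⟩
  simpa using congr($hΨ (φ q))

end Section

end CentralExtension

open CentralExtension MonoidHom

theorem stmt4_general {k : Type} [Field k] [IsAlgClosed k] {K : Type} [CommGroup K] [Finite K]
    {G : Type} [Group G]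
    (ι : kˣ →* G) (π : G →* K)
    (hinj : Function.Injective ι) (hsurj : Function.Surjective π)
    (hexact : π.ker = ι.range)
    (hnondeg : ι.range = Subgroup.center G)
    (c : K → K → kˣ)
    (hc : ∀ a b : G, ι (c (π a) (π b)) = ⁅a, b⁆) :
    ∃ K₁ K₂ : Subgroup K,
      IsCompl K₁ K₂ ∧
      (∀ x ∈ K₁, ∀ y ∈ K₁, c x y = 1) ∧
      (∀ x ∈ K₂, ∀ y ∈ K₂, c x y = 1) ∧
      (∀ x ∈ K₁, (∀ y ∈ K₂, c x y = 1) → x = 1) ∧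
      (∀ y ∈ K₂, (∀ x ∈ K₁, c x y = 1) → y = 1) ∧
      ∃ e : G ≃ kˣ × K₁ × K₂,
        (∀ g h : G,
          e (g * h) =
            ((e g).1 * (e h).1 * c ((e g).2.1 : K) ((e h).2.2 : K),
              (e g).2.1 * (e h).2.1, (e g).2.2 * (e h).2.2)) ∧
        (∀ α : kˣ, e (ι α) = (α, 1, 1)) ∧
        (∀ g : G, π g = ((e g).2.1 : K) * ((e g).2.2 : K)) := by
  set B := commutatorForm hinj hsurj hnondeg.le hc
  have hB : B.IsAlt := isAlt_commutatorForm hinj hsurj hnondeg.le hc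
  have hBnd : Function.Injective B :=
    injective_commutatorForm hinj hsurj hnondeg.le hc hnondeg.ge hexact.ge
  obtain ⟨K₁, K₂, hK, hK₁, hK₂⟩ := hB.exists_isCompl_le_orthogonal hBnd
  have hlift (Q : Subgroup K) (hQ : Q ≤ B.orthogonal Q) : ∃ s : Q →* G, ∀ q, π (s q) = q :=
    exists_monoidHom_section hsurj hexact Q fun a b ha hb ↦
      commute_of_form_eq_one hc (le_orthogonal_iff.mp hQ _ ha _ hb)
  obtain ⟨s₁, hs₁⟩ := hlift K₁ hK₁
  obtain ⟨s₂, hs₂⟩ := hlift K₂ hK₂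
  refine ⟨K₁, K₂, hK, le_orthogonal_iff.mp hK₁, le_orthogonal_iff.mp hK₂,
    fun x hx h ↦ disjoint_def.mp (disjoint_orthogonal_of_isCompl hBnd hK hK₁) hx
      (mem_orthogonal.mpr h),
    fun y hy h ↦ disjoint_def.mp (disjoint_orthogonal_of_isCompl hBnd hK.symm hK₂) hy
      (hB.mem_orthogonal_iff_swap.mpr h),
    exists_equiv_twisted_prod hinj hexact hnondeg.le hc hK hs₁ hs₂⟩

/-- Let `G` be a non-degenerate central extension of `kˣ` by a finite abelian
group `K` (`char k ∤ |K|`, `k` algebraically closed), with commutator form `c` (so that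
`ι (c (π a) (π b)) = ⁅a,b⁆`).  Then there are subgroups `K₁, K₂` with `K = K₁ ⊕ K₂`, the form `c`
trivial on each `Kᵢ`, the pairing `K₁ × K₂ → kˣ`, `(x₁,x₂) ↦ c x₁ x₂`, non-degenerate, and `G` is
equivalent, as a central extension of `kˣ` by `K`, to the group `kˣ × K₁ × K₂` with multiplication
`(α,x₁,x₂)·(β,y₁,y₂) = (αβ⟨x₁,y₂⟩, x₁y₁, x₂y₂)`: there is a bijection `e : G ≃ kˣ × K₁ × K₂`
transporting the multiplication of `G` to this multiplication, sending `ι α` to `(α,1,1)` and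
commuting with the projections to `K`. -/
theorem stmt4 {k : Type} [Field k] [IsAlgClosed k] {K : Type} [CommGroup K] [Finite K]
    {G : Type} [Group G]
    (hchar : ¬ (ringChar k ∣ Nat.card K))
    (ι : kˣ →* G) (π : G →* K)
    (hinj : Function.Injective ι) (hsurj : Function.Surjective π)
    (hexact : π.ker = ι.range)
    (hnondeg : ι.range = Subgroup.center G)
    (c : K → K → kˣ)
    (hc : ∀ a b : G, ι (c (π a) (π b)) = ⁅a, b⁆) :
    ∃ K₁ K₂ : Subgroup K,
      IsCompl K₁ K₂ ∧
      (∀ x ∈ K₁, ∀ y ∈ K₁, c x y = 1) ∧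
      (∀ x ∈ K₂, ∀ y ∈ K₂, c x y = 1) ∧
      (∀ x ∈ K₁, (∀ y ∈ K₂, c x y = 1) → x = 1) ∧
      (∀ y ∈ K₂, (∀ x ∈ K₁, c x y = 1) → y = 1) ∧
      ∃ e : G ≃ kˣ × K₁ × K₂,
        (∀ g h : G,
          e (g * h) =
            ((e g).1 * (e h).1 * c ((e g).2.1 : K) ((e h).2.2 : K),
              (e g).2.1 * (e h).2.1, (e g).2.2 * (e h).2.2)) ∧
        (∀ α : kˣ, e (ι α) = (α, 1, 1)) ∧
        (∀ g : G, π g = ((e g).2.1 : K) * ((e g).2.2 : K)) :=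
  stmt4_general ι π hinj hsurj hexact hnondeg c hc
end

section
/- Let G be the group with underlying set k^× × K₁ × K₂, where K₂ = Hom(K₁, k^×), K₁ a finite abelian group of type (d₁,…,d_p), with multiplication (α,x₁,x₂)·(β,y₁,y₂) = (αβ⟨x₁,y₂⟩, x₁+y₁, x₂+y₂). For each integer n, every nonzero weight-n G-module admits a G-submodule of dimension D_n = (d₁⋯d_p)/(gcd(n,d₁)⋯gcd(n,d_p)). -/
abbrev ThetaK1 (p : ℕ) (d : Fin p → ℕ) : Type := ∀ i : Fin p, Multiplicative (ZMod (d i))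

abbrev ThetaK2 (k : Type) [Field k] (p : ℕ) (d : Fin p → ℕ) : Type := ThetaK1 p d →* kˣ

def Heis (k : Type) [Field k] (p : ℕ) (d : Fin p → ℕ) : Type :=
  kˣ × ThetaK1 p d × ThetaK2 k p d

namespace Heis

variable {k : Type} [Field k] {p : ℕ} {d : Fin p → ℕ}

def mk (α : kˣ) (x : ThetaK1 p d) (χ : ThetaK2 k p d) : Heis k p d := (α, x, χ)

instance : Mul (Heis k p d) :=
  ⟨fun a b => (a.1 * b.1 * b.2.2 a.2.1, a.2.1 * b.2.1, a.2.2 * b.2.2)⟩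

instance : One (Heis k p d) := ⟨((1 : kˣ), 1, 1)⟩

instance : Inv (Heis k p d) := ⟨fun a => (a.1⁻¹ * a.2.2 a.2.1, a.2.1⁻¹, a.2.2⁻¹)⟩

theorem mul_def (a b : Heis k p d) :
    a * b = (a.1 * b.1 * b.2.2 a.2.1, a.2.1 * b.2.1, a.2.2 * b.2.2) := rfl

theorem one_def : (1 : Heis k p d) = ((1 : kˣ), 1, 1) := rfl

theorem inv_def (a : Heis k p d) :
    a⁻¹ = (a.1⁻¹ * a.2.2 a.2.1, a.2.1⁻¹, a.2.2⁻¹) := rfl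

theorem mul_assoc' (a b c : Heis k p d) : a * b * c = a * (b * c) := by
  obtain ⟨α, x, χ⟩ := a
  obtain ⟨β, y, ψ⟩ := b
  obtain ⟨γ, z, ω⟩ := c
  refine Prod.ext ?_ (Prod.ext ?_ ?_)
  · show α * β * ψ x * γ * (ω (x * y)) = α * (β * γ * ω y) * ((ψ * ω) x)
    simp [map_mul, MonoidHom.mul_apply, mul_assoc, mul_comm, mul_left_comm]
  · exact mul_assoc x y z
  · exact mul_assoc χ ψ ω

theorem one_mul' (a : Heis k p d) : 1 * a = a := by
  obtain ⟨α, x, χ⟩ := a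
  refine Prod.ext ?_ (Prod.ext ?_ ?_)
  · show 1 * α * χ 1 = α
    simp
  · exact one_mul x
  · exact one_mul χ

theorem mul_one' (a : Heis k p d) : a * 1 = a := by
  obtain ⟨α, x, χ⟩ := a
  refine Prod.ext ?_ (Prod.ext ?_ ?_)
  · show α * 1 * (1 : ThetaK2 k p d) x = α
    simp
  · exact mul_one x
  · exact mul_one χ

theorem inv_mul_cancel' (a : Heis k p d) : a⁻¹ * a = 1 := by
  obtain ⟨α, x, χ⟩ := a
  refine Prod.ext ?_ (Prod.ext ?_ ?_)
  · show α⁻¹ * χ x * α * χ (x⁻¹) = 1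
    simp [map_inv, mul_comm, mul_left_comm]
  · exact inv_mul_cancel x
  · exact inv_mul_cancel χ

instance : Group (Heis k p d) where
  mul_assoc := mul_assoc'
  one_mul := one_mul'
  mul_one := mul_one'
  inv_mul_cancel := inv_mul_cancel'

/-- The multiplication rule of the Heisenberg-type group. -/
theorem mk_mul (α β : kˣ) (x y : ThetaK1 p d) (χ ψ : ThetaK2 k p d) :
    mk α x χ * mk β y ψ = mk (α * β * ψ x) (x * y) (χ * ψ) := rfl

end Heis

section Reps

variable {k : Type} [Field k]

/-- A subspace stable under a representation. -/
def RepStable {G V : Type} [Group G] [AddCommGroup V] [Module k V]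
    (ρ : G →* (V →ₗ[k] V)ˣ) (W : Submodule k V) : Prop :=
  ∀ (g : G), ∀ w ∈ W, (ρ g : V →ₗ[k] V) w ∈ W

/-- Irreducibility: nonzero and no nontrivial stable subspace. -/
def RepIrred {G V : Type} [Group G] [AddCommGroup V] [Module k V]
    (ρ : G →* (V →ₗ[k] V)ˣ) : Prop :=
  (∃ v : V, v ≠ 0) ∧
  ∀ W : Submodule k V, RepStable ρ W → W = ⊥ ∨ W = ⊤

/-- Isomorphism of representations of `G`. -/
def RepIso {G V W : Type} [Group G] [AddCommGroup V] [Module k V]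
    [AddCommGroup W] [Module k W]
    (ρ : G →* (V →ₗ[k] V)ˣ) (τ : G →* (W →ₗ[k] W)ˣ) : Prop :=
  ∃ e : V ≃ₗ[k] W, ∀ (g : G) (v : V), e ((ρ g : V →ₗ[k] V) v) = (τ g : W →ₗ[k] W) (e v)

variable {p : ℕ} {d : Fin p → ℕ}

/-- A representation of the Heisenberg-type group has weight `n` if `kˣ ⊆ G` acts through the
character `α ↦ αⁿ`. -/
def IsWeight (n : ℤ) {V : Type} [AddCommGroup V] [Module k V]
    (ρ : Heis k p d →* (V →ₗ[k] V)ˣ) : Prop :=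
  ∀ (α : kˣ) (v : V), (ρ (Heis.mk α 1 1) : V →ₗ[k] V) v = ((α ^ n : kˣ) : k) • v

/-- `D n = (d₁⋯d_p)/(gcd(n,d₁)⋯gcd(n,d_p))`. -/
def ThetaD (p : ℕ) (d : Fin p → ℕ) (n : ℤ) : ℕ :=
  (∏ i, d i) / ∏ i, Int.gcd n (d i)

end Reps

/-!
The subgroup `K₁ · ker (χ ↦ χⁿ)` acts on `V` by commuting operators, because `⟨x, ν⟩ⁿ = 1` for `ν`
in the kernel, so it has a common eigenvector `v`, on which `K₁` acts by some `λ`. By the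
commutation rule, `K₁` acts on `ρ(χ) v` by the character `χⁿ · λ`; hence the vectors `ρ(χ) v`,
`χ ∈ K₂`, span a `G`-stable subspace `W`. Up to scalars `ρ(χ) v` depends only on `χⁿ`, and
eigenvectors for distinct characters are linearly independent, so `dim W = |K₂ⁿ| = |K₂| / |K₂[n]|`.
Since `char k ∤ dᵢ`, `k` has enough roots of unity to make `K₂ ≅ K₁`, whence
`|K₂[n]| = ∏ gcd(n, dᵢ)`.
-/

open Module

namespace Module.End

variable {K V ι : Type*} [Field K] [AddCommGroup V] [Module K V]

theorem unit_apply_ne_zero {R M : Type*} [Semiring R] [AddCommMonoid M] [Module R M]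
    (u : (End R M)ˣ) {v : M} (hv : v ≠ 0) : (u : End R M) v ≠ 0 := fun h ↦ hv <| by
  simpa [← mul_apply] using congrArg (↑u⁻¹ : End R M) h

theorem exists_common_eigenvector [IsAlgClosed K] [FiniteDimensional K V] [Nontrivial V]
    (f : ι → End K V) (hf : ∀ i j, Commute (f i) (f j)) :
    ∃ v : V, v ≠ 0 ∧ ∃ μ : ι → K, ∀ i, f i v = μ i • v := by
  induction hN : finrank K V using Nat.strong_induction_on generalizing V with
  | _ N ih =>
  choose μ hμ using fun i ↦ exists_eigenvalue (f i)
  by_cases hscalar : ∀ i, eigenspace (f i) (μ i) = ⊤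
  · obtain ⟨v, hv⟩ := exists_ne (0 : V)
    refine ⟨v, hv, μ, fun i ↦ mem_eigenspace_iff.mp ?_⟩
    simp [hscalar i]
  push Not at hscalar
  obtain ⟨i, hi⟩ := hscalar
  -- an eigenspace of one member is a proper nonzero subspace preserved by the whole family
  set E := eigenspace (f i) (μ i)
  have hE : ∀ j, Set.MapsTo (f j) E E := fun j ↦ mapsTo_genEigenspace_of_comm (hf i j) (μ i) 1
  have : Nontrivial E := Submodule.nontrivial_iff_ne_bot.mpr (hμ i)
  obtain ⟨v, hv, ν, hν⟩ := ih _ (hN ▸ Submodule.finrank_lt hi)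
    (fun j ↦ (f j).restrict (hE j))
    (fun j l ↦ LinearMap.ext fun x ↦ Subtype.ext (LinearMap.congr_fun (hf j l) x)) rfl
  exact ⟨v, by simpa using hv, ν, fun j ↦ congrArg Subtype.val (hν j)⟩

theorem linearIndependent_of_forall_apply_eq_smul {κ : Type*} (f : ι → End K V)
    (hf : ∀ i j, Commute (f i) (f j)) {w : κ → V} {c : κ → ι → K} (hc : Function.Injective c)
    (hw₀ : ∀ q, w q ≠ 0) (hw : ∀ q i, f i (w q) = c q i • w q) : LinearIndependent K w := by
  refine ((independent_iInf_maxGenEigenspace_of_forall_mapsTo f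
    fun i j φ ↦ mapsTo_maxGenEigenspace_of_comm (hf j i) φ).comp hc).linearIndependent _
    (fun q ↦ (Submodule.mem_iInf _).mpr fun i ↦ ?_) hw₀
  exact mem_maxGenEigenspace _ _ _ |>.mpr ⟨1, by simp [hw q i]⟩

end Module.End

section Counting

variable {G H : Type*} [CommGroup G] [CommGroup H]

theorem MulEquiv.card_zpowGroupHom_ker (e : G ≃* H) (n : ℤ) :
    Nat.card (zpowGroupHom n : G →* G).ker = Nat.card (zpowGroupHom n : H →* H).ker :=
  Nat.card_congr <| (e : G ≃ H).subtypeEquiv fun x ↦ by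
    simp [MonoidHom.mem_ker, ← map_zpow, e.map_eq_one_iff]

theorem card_zpowGroupHom_range_mul_card_ker [Finite G] (n : ℤ) :
    Nat.card (zpowGroupHom n : G →* G).range * Nat.card (zpowGroupHom n : G →* G).ker =
      Nat.card G := by
  rw [← Subgroup.index_ker, mul_comm, Subgroup.card_mul_index]

theorem card_zpowGroupHom_ker_pi {ι : Type*} [Fintype ι] (G : ι → Type*) [∀ i, CommGroup (G i)]
    (n : ℤ) : Nat.card (zpowGroupHom n : (∀ i, G i) →* ∀ i, G i).ker =
      ∏ i, Nat.card (zpowGroupHom n : G i →* G i).ker := by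
  rw [← Nat.card_pi]
  refine Nat.card_congr <| (Equiv.subtypeEquivRight fun x ↦ ?_).trans Equiv.subtypePiEquivPi
  simp [MonoidHom.mem_ker, funext_iff]

theorem card_zpowGroupHom_ker_zmod (m : ℕ) [NeZero m] (n : ℤ) :
    Nat.card (zpowGroupHom n : Multiplicative (ZMod m) →* _).ker = Int.gcd n m := by
  have : (zpowGroupHom n : Multiplicative (ZMod m) →* _).ker = (powMonoidHom n.natAbs).ker := by
    ext x
    simp [MonoidHom.mem_ker, pow_natAbs_eq_one]
  rw [this, IsCyclic.card_powMonoidHom_ker, Nat.gcd_comm, Int.gcd]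
  simp

theorem nonempty_monoidHom_units_mulEquiv (K : Type*) [Field K] [IsSepClosed K] [Finite G]
    (hG : (Nat.card G : K) ≠ 0) : Nonempty ((G →* Kˣ) ≃* G) := by
  have : NeZero (Nat.card G : K) := ⟨hG⟩
  have := HasEnoughRootsOfUnity.of_dvd K (Group.exponent_dvd_nat_card (G := G))
  exact CommGroup.monoidHom_mulEquiv_of_hasEnoughRootsOfUnity G K

end Counting

section Theta

variable {k : Type} [Field k] {p : ℕ} {d : Fin p → ℕ} [∀ i, NeZero (d i)]

theorem card_thetaK1 : Nat.card (ThetaK1 p d) = ∏ i, d i := by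
  simp

theorem nonempty_thetaK2_mulEquiv [IsAlgClosed k] (hchar : ∀ i, ¬ ringChar k ∣ d i) :
    Nonempty (ThetaK2 k p d ≃* ThetaK1 p d) :=
  nonempty_monoidHom_units_mulEquiv k <| by
    simp [Finset.prod_ne_zero_iff, CharP.cast_eq_zero_iff k (ringChar k), hchar]

theorem card_zpowGroupHom_range_thetaK2 [IsAlgClosed k] (hchar : ∀ i, ¬ ringChar k ∣ d i)
    (n : ℤ) : Nat.card (zpowGroupHom (α := ThetaK2 k p d) n).range = ThetaD p d n := by
  obtain ⟨e⟩ := nonempty_thetaK2_mulEquiv hchar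
  have : Finite (ThetaK2 k p d) := .of_equiv _ e.symm.toEquiv
  have hker := card_zpowGroupHom_range_mul_card_ker (G := ThetaK2 k p d) n
  rw [e.card_zpowGroupHom_ker, card_zpowGroupHom_ker_pi, Nat.card_congr e.toEquiv,
    card_thetaK1] at hker
  simp only [card_zpowGroupHom_ker_zmod] at hker
  rw [ThetaD, ← hker, Nat.mul_div_cancel _ (Finset.prod_pos fun i _ ↦ ?_)]
  exact Int.gcd_pos_of_ne_zero_right _ (by exact_mod_cast NeZero.ne (d i))

end Theta

namespace Heis

variable {k : Type} [Field k] {p : ℕ} {d : Fin p → ℕ}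

theorem mk_eq_mk {α β : kˣ} {x y : ThetaK1 p d} {χ ψ : ThetaK2 k p d} :
    mk α x χ = mk β y ψ ↔ α = β ∧ x = y ∧ ∀ z, χ z = ψ z := by
  change ((α, x, χ) : kˣ × ThetaK1 p d × ThetaK2 k p d) = (β, y, ψ) ↔ _
  simp [MonoidHom.ext_iff]

def central : kˣ →* Heis k p d where
  toFun α := mk α 1 1
  map_one' := rfl
  map_mul' α β := by simp [mk_mul, mk_eq_mk]

@[simp] theorem central_apply (α : kˣ) : central α = (mk α 1 1 : Heis k p d) := rfl

def ofK1 : ThetaK1 p d →* Heis k p d where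
  toFun x := mk 1 x 1
  map_one' := rfl
  map_mul' x y := by simp [mk_mul, mk_eq_mk]

@[simp] theorem ofK1_apply (x : ThetaK1 p d) : ofK1 x = (mk 1 x 1 : Heis k p d) := rfl

def ofK2 : ThetaK2 k p d →* Heis k p d where
  toFun χ := mk 1 1 χ
  map_one' := rfl
  map_mul' χ ψ := by simp [mk_mul]

@[simp] theorem ofK2_apply (χ : ThetaK2 k p d) : ofK2 χ = mk 1 1 χ := rfl

theorem ofK1_mul_ofK2 (x : ThetaK1 p d) (χ : ThetaK2 k p d) :
    ofK1 x * ofK2 χ = central (χ x) * (ofK2 χ * ofK1 x) := by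
  simp [mk_mul, mk_eq_mk]

theorem eq_central_mul_ofK2_mul_ofK1 (g : Heis k p d) :
    g = central g.1 * ofK2 g.2.2 * ofK1 g.2.1 := by
  change mk g.1 g.2.1 g.2.2 = _
  simp [mk_mul, mk_eq_mk]

end Heis

section WeightModule

open Heis

variable {k : Type} [Field k] {p : ℕ} {d : Fin p → ℕ} {n : ℤ} {V : Type} [AddCommGroup V]
  [Module k V] {ρ : Heis k p d →* (V →ₗ[k] V)ˣ}

theorem IsWeight.apply_central (hw : IsWeight n ρ) (α : kˣ) (v : V) :
    (ρ (central α) : End k V) v = ((α ^ n : kˣ) : k) • v :=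
  hw α v

theorem IsWeight.apply_ofK1_apply_ofK2 (hw : IsWeight n ρ) (x : ThetaK1 p d)
    (χ : ThetaK2 k p d) (v : V) :
    (ρ (ofK1 x) : End k V) ((ρ (ofK2 χ) : End k V) v) =
      ((χ x ^ n : kˣ) : k) • (ρ (ofK2 χ) : End k V) ((ρ (ofK1 x) : End k V) v) := by
  rw [← End.mul_apply, ← Units.val_mul, ← map_mul, ofK1_mul_ofK2, map_mul, map_mul,
    Units.val_mul, Units.val_mul, End.mul_apply, End.mul_apply]
  exact hw.apply_central _ _

theorem IsWeight.commute_ofK1_ofK2 (hw : IsWeight n ρ) (x : ThetaK1 p d) {χ : ThetaK2 k p d}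
    (hχ : χ ∈ (zpowGroupHom (α := ThetaK2 k p d) n).ker) :
    Commute (ρ (ofK1 x) : End k V) (ρ (ofK2 χ) : End k V) := by
  have : χ x ^ n = 1 := by simpa [← MonoidHom.zpow_apply] using congrArg (· x) hχ
  exact LinearMap.ext fun v ↦ by simpa [this] using hw.apply_ofK1_apply_ofK2 x χ v

theorem IsWeight.exists_common_eigenvector [IsAlgClosed k] [FiniteDimensional k V]
    [Nontrivial V] (hw : IsWeight n ρ) :
    ∃ v : V, v ≠ 0 ∧ ∃ lam : ThetaK1 p d → k, (∀ x, (ρ (ofK1 x) : End k V) v = lam x • v) ∧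
      ∀ ν ∈ (zpowGroupHom (α := ThetaK2 k p d) n).ker,
        ∃ c : k, (ρ (ofK2 ν) : End k V) v = c • v := by
  have hcomm {G : Type} [CommGroup G] (f : G →* Heis k p d) (a b : G) :
      Commute (ρ (f a) : End k V) (ρ (f b) : End k V) :=
    (((Commute.all a b).map f).map ρ).units_val
  obtain ⟨v, hv, μ, hμ⟩ := Module.End.exists_common_eigenvector
    (Sum.elim (fun x ↦ (ρ (ofK1 x) : End k V))
      fun ν : (zpowGroupHom (α := ThetaK2 k p d) n).ker ↦ (ρ (ofK2 ν) : End k V)) <| by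
    rintro (x | ν) (y | ν')
    exacts [hcomm ofK1 x y, hw.commute_ofK1_ofK2 x ν'.2, (hw.commute_ofK1_ofK2 y ν.2).symm,
      hcomm ofK2 ν ν']
  exact ⟨v, hv, _, fun x ↦ hμ (.inl x), fun ν hν ↦ ⟨_, hμ (.inr ⟨ν, hν⟩)⟩⟩

theorem IsWeight.repStable_span_apply_ofK2 (hw : IsWeight n ρ) {v : V} {lam : ThetaK1 p d → k}
    (hlam : ∀ x, (ρ (ofK1 x) : End k V) v = lam x • v) :
    RepStable ρ
      (Submodule.span k (Set.range fun χ : ThetaK2 k p d ↦ (ρ (ofK2 χ) : End k V) v)) := by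
  set W := Submodule.span k (Set.range fun χ : ThetaK2 k p d ↦ (ρ (ofK2 χ) : End k V) v)
  have hgen (T : End k V) (hT : ∀ χ, T ((ρ (ofK2 χ) : End k V) v) ∈ W) {u : V} (hu : u ∈ W) :
      T u ∈ W :=
    (Submodule.span_le (p := W.comap T)).mpr (Set.range_subset_iff.mpr hT) hu
  intro g u hu
  rw [eq_central_mul_ofK2_mul_ofK1 g, map_mul, map_mul, Units.val_mul, Units.val_mul,
    End.mul_apply, End.mul_apply, hw.apply_central]
  refine W.smul_mem _ (hgen _ (fun χ ↦ ?_) (hgen _ (fun χ ↦ ?_) hu))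
  · rw [← End.mul_apply, ← Units.val_mul, ← map_mul, ← map_mul]
    exact Submodule.subset_span ⟨_, rfl⟩
  · rw [hw.apply_ofK1_apply_ofK2, hlam, map_smul, smul_smul]
    exact W.smul_mem _ (Submodule.subset_span ⟨χ, rfl⟩)

theorem IsWeight.linearIndependent_apply_ofK2 (hw : IsWeight n ρ) {v : V} (hv : v ≠ 0)
    {lam : ThetaK1 p d → k} (hlam : ∀ x, (ρ (ofK1 x) : End k V) v = lam x • v) {κ : Type*}
    {χ : κ → ThetaK2 k p d} (hχ : Function.Injective fun q ↦ χ q ^ n) :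
    LinearIndependent k fun q ↦ (ρ (ofK2 (χ q)) : End k V) v := by
  have hlam₀ (x : ThetaK1 p d) : lam x ≠ 0 := by
    intro h
    exact End.unit_apply_ne_zero (ρ (ofK1 x)) hv (by rw [hlam, h, zero_smul])
  refine Module.End.linearIndependent_of_forall_apply_eq_smul (fun x ↦ (ρ (ofK1 x) : End k V))
    (fun x y ↦ (((Commute.all x y).map ofK1).map ρ).units_val)
    (c := fun q x ↦ ((χ q x ^ n : kˣ) : k) * lam x) (fun q q' h ↦ hχ ?_)
    (fun q ↦ End.unit_apply_ne_zero (ρ _) hv) fun q x ↦ ?_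
  · refine MonoidHom.ext fun x ↦ Units.ext ?_
    simpa [MonoidHom.zpow_apply, hlam₀] using congrFun h x
  · rw [hw.apply_ofK1_apply_ofK2, hlam, map_smul, smul_smul]

theorem IsWeight.finrank_span_apply_ofK2 [Finite (ThetaK2 k p d)] (hw : IsWeight n ρ) {v : V}
    (hv : v ≠ 0) {lam : ThetaK1 p d → k} (hlam : ∀ x, (ρ (ofK1 x) : End k V) v = lam x • v)
    (hker : ∀ ν ∈ (zpowGroupHom (α := ThetaK2 k p d) n).ker,
      ∃ c : k, (ρ (ofK2 ν) : End k V) v = c • v) :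
    finrank k (Submodule.span k (Set.range fun χ : ThetaK2 k p d ↦ (ρ (ofK2 χ) : End k V) v)) =
      Nat.card (zpowGroupHom (α := ThetaK2 k p d) n).range := by
  set Φ := zpowGroupHom (α := ThetaK2 k p d) n
  have := Fintype.ofFinite Φ.range
  set s := Function.surjInv Φ.rangeRestrict_surjective
  have hs (η : Φ.range) : s η ^ n = η :=
    congrArg Subtype.val (Function.surjInv_eq Φ.rangeRestrict_surjective η)
  -- each `χ` is `s (χ ^ n)` times an element of `ker Φ`, which only rescales `v`
  have hspan : Submodule.span k (Set.range fun χ ↦ (ρ (ofK2 χ) : End k V) v) =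
      Submodule.span k (Set.range fun η ↦ (ρ (ofK2 (s η)) : End k V) v) := by
    refine le_antisymm (Submodule.span_le.mpr (Set.range_subset_iff.mpr fun χ ↦ ?_))
      (Submodule.span_mono (Set.range_comp_subset_range s fun χ ↦ (ρ (ofK2 χ) : End k V) v))
    set η := Φ.rangeRestrict χ
    obtain ⟨c, hc⟩ := hker ((s η)⁻¹ * χ) (Φ.eq_iff.mp (hs η).symm)
    rw [← mul_inv_cancel_left (s η) χ, map_mul, map_mul, Units.val_mul, End.mul_apply, hc,
      map_smul]
    exact Submodule.smul_mem _ _ (Submodule.subset_span ⟨η, rfl⟩)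
  rw [hspan, finrank_span_eq_card (hw.linearIndependent_apply_ofK2 hv hlam fun η η' h ↦
    Subtype.ext (by simpa [hs] using h)), Nat.card_eq_fintype_card]

end WeightModule

theorem stmt5_general {k : Type} [Field k] [IsAlgClosed k] {p : ℕ} {d : Fin p → ℕ}
    (hd0 : ∀ i, 0 < d i)
    (hchar : ∀ i, ¬ (ringChar k ∣ d i))
    (n : ℤ) (V : Type) [AddCommGroup V] [Module k V] [FiniteDimensional k V]
    (ρ : Heis k p d →* (V →ₗ[k] V)ˣ)
    (hw : IsWeight n ρ) (hV : ∃ v : V, v ≠ 0) :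
    ∃ W : Submodule k V, RepStable ρ W ∧ Module.finrank k ↥W = ThetaD p d n := by
  have : ∀ i, NeZero (d i) := fun i ↦ ⟨(hd0 i).ne'⟩
  obtain ⟨e⟩ := nonempty_thetaK2_mulEquiv hchar
  have : Finite (ThetaK2 k p d) := .of_equiv _ e.symm.toEquiv
  obtain ⟨v₀, hv₀⟩ := hV
  have : Nontrivial V := nontrivial_of_ne v₀ 0 hv₀
  obtain ⟨v, hv, lam, hlam, hker⟩ := hw.exists_common_eigenvector
  refine ⟨_, hw.repStable_span_apply_ofK2 hlam, ?_⟩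
  rw [hw.finrank_span_apply_ofK2 hv hlam hker, card_zpowGroupHom_range_thetaK2 hchar n]

/-- Let `G = kˣ × K₁ × K₂` be the Heisenberg-type group of type
`(d₁,…,d_p)` (so `K₁ = ⊕ᵢ ℤ/dᵢ`, `K₂ = Hom(K₁,kˣ)`, `d₁ ∣ d₂ ∣ ⋯ ∣ d_p`, `char k ∤ dᵢ`,
`k` algebraically closed).  For each integer `n`, every nonzero weight-`n` `G`-module admits a
`G`-submodule of dimension `D_n = (d₁⋯d_p)/(gcd(n,d₁)⋯gcd(n,d_p))`. -/
theorem stmt5 {k : Type} [Field k] [IsAlgClosed k] {p : ℕ} {d : Fin p → ℕ}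
    (hd0 : ∀ i, 0 < d i) (hchain : ∀ i j : Fin p, i ≤ j → d i ∣ d j)
    (hchar : ∀ i, ¬ (ringChar k ∣ d i))
    (n : ℤ) (V : Type) [AddCommGroup V] [Module k V] [FiniteDimensional k V]
    (ρ : Heis k p d →* (V →ₗ[k] V)ˣ)
    (hw : IsWeight n ρ) (hV : ∃ v : V, v ≠ 0) :
    ∃ W : Submodule k V, RepStable ρ W ∧ Module.finrank k ↥W = ThetaD p d n :=
  stmt5_general hd0 hchar n V ρ hw hV
end

section
/- Every weight-n module over the Heisenberg-type group G of type (d₁,…,d_p) decomposes as a direct sum of irreducible weight-n G-modules. -/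
/-!
The elements of `G` whose scalar part is a `D`-th root of unity, `D = d₁⋯d_p`, form a finite
subgroup `H` in which every element satisfies `g ^ (D * D) = 1`; as `char k ∤ D`, the order
of `H` is invertible in `k`. Since `G = k^× · H` and `k^×` acts by scalars on a weight-`n`
module, the `G`-stable subspaces are exactly the `H`-stable ones, so Maschke's theorem for `H`
gives the decomposition.
-/

open scoped MonoidAlgebra

theorem sSupIndep.image_of_injective {α β : Type*} [CompleteLattice α] [CompleteLattice β]
    {φ : CompleteLatticeHom α β} (hφ : Function.Injective φ) {s : Set α} (hs : sSupIndep s) :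
    sSupIndep (φ '' s) := by
  rintro _ ⟨a, ha, rfl⟩
  rw [← Set.image_singleton, ← Set.image_sdiff hφ, ← map_sSup]
  exact (hs ha).map φ

theorem natCast_card_ne_zero_of_forall_pow_eq_one {G k : Type*} [Group G] [Finite G] [Field k]
    {m : ℕ} (hG : ∀ g : G, g ^ m = 1) (hm : (m : k) ≠ 0) : (Nat.card G : k) ≠ 0 := by
  rw [Ne, ringChar.spec]
  intro hdvd
  rcases CharP.char_is_prime_or_zero k (ringChar k) with hq | hq
  · have : Fact (ringChar k).Prime := ⟨hq⟩
    obtain ⟨g, hg⟩ := exists_prime_orderOf_dvd_card' (ringChar k) hdvd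
    exact hm ((ringChar.spec k m).2 (hg ▸ orderOf_dvd_of_pow_eq_one (hG g)))
  · rw [hq, zero_dvd_iff] at hdvd
    exact Nat.card_pos.ne' hdvd

namespace Representation

variable {k G V : Type*} [Field k] [Group G] [AddCommGroup V] [Module k V]

noncomputable def submoduleOfAsModule (ρ : Representation k G V) :
    CompleteLatticeHom (Submodule k[G] ρ.asModule) (Submodule k V) :=
  (CompleteLatticeHom.OrderIso.toCompleteLatticeHom
    (Submodule.orderIsoMapComap ρ.asModuleEquiv.symm).symm).comp
      (Submodule.restrictScalarsLatticeHom k k[G] ρ.asModule)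

theorem submoduleOfAsModule_eq_mapSubmodule_symm (ρ : Representation k G V)
    (q : Submodule k[G] ρ.asModule) :
    ρ.submoduleOfAsModule q = ρ.mapSubmodule.symm q := rfl

theorem submoduleOfAsModule_le_iff (ρ : Representation k G V)
    {q q' : Submodule k[G] ρ.asModule} :
    ρ.submoduleOfAsModule q ≤ ρ.submoduleOfAsModule q' ↔ q ≤ q' := by
  simp only [submoduleOfAsModule_eq_mapSubmodule_symm, Subtype.coe_le_coe,
    OrderIso.le_iff_le]

theorem submoduleOfAsModule_injective (ρ : Representation k G V) :
    Function.Injective ρ.submoduleOfAsModule := fun _ _ h =>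
  le_antisymm (ρ.submoduleOfAsModule_le_iff.1 h.le) (ρ.submoduleOfAsModule_le_iff.1 h.ge)

theorem submoduleOfAsModule_mem_invtSubmodule (ρ : Representation k G V)
    (q : Submodule k[G] ρ.asModule) : ρ.submoduleOfAsModule q ∈ ρ.invtSubmodule :=
  (ρ.mapSubmodule.symm q).2

theorem submoduleOfAsModule_mapSubmodule (ρ : Representation k G V) {U : Submodule k V}
    (hU : U ∈ ρ.invtSubmodule) : ρ.submoduleOfAsModule (ρ.mapSubmodule ⟨U, hU⟩) = U := by
  rw [submoduleOfAsModule_eq_mapSubmodule_symm, OrderIso.symm_apply_apply]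

theorem exists_isInternal_irreducible [Finite G] [NeZero (Nat.card G : k)]
    [FiniteDimensional k V] (ρ : Representation k G V) :
    ∃ s : Set (Submodule k V), s.Finite ∧ DirectSum.IsInternal ((↑) : s → Submodule k V) ∧
      ∀ W ∈ s, W ∈ ρ.invtSubmodule ∧ W ≠ ⊥ ∧
        ∀ U ∈ ρ.invtSubmodule, U ≤ W → U = ⊥ ∨ U = W := by
  obtain ⟨t, hindep, htop, hsimple⟩ :=
    IsSemisimpleModule.exists_sSupIndep_sSup_simples_eq_top k[G] ρ.asModule
  have hindep' := hindep.image_of_injective ρ.submoduleOfAsModule_injective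
  refine ⟨_, WellFoundedGT.finite_of_sSupIndep hindep', ?_, ?_⟩
  · refine DirectSum.isInternal_submodule_of_iSupIndep_of_iSup_eq_top
      ((sSupIndep_iff _).1 hindep') ?_
    rw [← sSup_eq_iSup', ← map_sSup, htop, map_top]
  rintro _ ⟨q, hq, rfl⟩
  have hatom : IsAtom q := (isSimpleModule_iff_isAtom).1 (hsimple q hq)
  refine ⟨ρ.submoduleOfAsModule_mem_invtSubmodule q, ?_, fun U hU hle => ?_⟩
  · rw [Ne, ← map_bot ρ.submoduleOfAsModule, ρ.submoduleOfAsModule_injective.eq_iff]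
    exact hatom.1
  · rw [← ρ.submoduleOfAsModule_mapSubmodule hU] at hle ⊢
    rw [ρ.submoduleOfAsModule_le_iff] at hle
    rcases hatom.le_iff.1 hle with h | h <;> simp only [h, map_bot, true_or, or_true]

end Representation

theorem repStable_iff_mem_invtSubmodule {k G V : Type} [Field k] [Group G] [AddCommGroup V]
    [Module k V] (ρ : G →* (V →ₗ[k] V)ˣ) (W : Submodule k V) :
    RepStable ρ W ↔
      W ∈ Representation.invtSubmodule ((Units.coeHom (V →ₗ[k] V)).comp ρ) := by
  simp only [Representation.mem_invtSubmodule, Module.End.mem_invtSubmodule]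
  rfl

theorem ThetaK1.pow_prod_eq_one {p : ℕ} {d : Fin p → ℕ} (x : ThetaK1 p d) :
    x ^ ∏ i, d i = 1 := by
  funext i
  obtain ⟨c, hc⟩ := Finset.dvd_prod_of_mem d (Finset.mem_univ i)
  rw [Pi.pow_apply, hc, pow_mul, Pi.one_apply]
  apply Multiplicative.toAdd.injective
  simp [toAdd_pow, nsmul_eq_mul]

namespace ThetaK2

variable {k : Type} [Field k] {p : ℕ} {d : Fin p → ℕ}

theorem apply_pow_prod_eq_one (χ : ThetaK2 k p d) (x : ThetaK1 p d) :
    χ x ^ ∏ i, d i = 1 := by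
  rw [← map_pow, x.pow_prod_eq_one, map_one]

theorem pow_prod_eq_one (χ : ThetaK2 k p d) : χ ^ ∏ i, d i = 1 :=
  MonoidHom.ext fun x => (MonoidHom.pow_apply χ _ x).trans (χ.apply_pow_prod_eq_one x)

instance [∀ i, NeZero (d i)] : Finite (ThetaK2 k p d) := by
  have : NeZero (∏ i, d i) := ⟨Finset.prod_ne_zero_iff.2 fun i _ => NeZero.ne (d i)⟩
  refine Finite.of_injective (fun χ : ThetaK2 k p d => fun x =>
    (⟨χ x, (mem_rootsOfUnity _ _).2 (χ.apply_pow_prod_eq_one x)⟩ :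
      rootsOfUnity (∏ i, d i) k))
    fun χ ψ h => MonoidHom.ext fun x => Subtype.ext_iff.1 (congrFun h x)

end ThetaK2

namespace Heis

variable {k : Type} [Field k] {p : ℕ} {d : Fin p → ℕ}

def scalar : kˣ →* Heis k p d where
  toFun α := mk α 1 1
  map_one' := rfl
  map_mul' α β := by
    rw [mk_mul, map_one, mul_one, mul_one, mul_one (1 : ThetaK2 k p d)]

def toTheta : Heis k p d →* ThetaK1 p d × ThetaK2 k p d where
  toFun g := (g.2.1, g.2.2)
  map_one' := rfl
  map_mul' _ _ := rfl

theorem eq_scalar_of_toTheta_eq_one {g : Heis k p d} (h : toTheta g = 1) : g = scalar g.1 := by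
  obtain ⟨α, x, χ⟩ := g
  obtain ⟨rfl, rfl⟩ := Prod.ext_iff.1 h
  rfl

theorem scalar_mul_mk_one (g : Heis k p d) : scalar g.1 * mk 1 g.2.1 g.2.2 = g := by
  obtain ⟨α, x, χ⟩ := g
  show mk α 1 1 * mk 1 x χ = mk α x χ
  rw [mk_mul, map_one, mul_one, mul_one, one_mul, one_mul χ]

variable (k p d) in
def rootsOfUnitySubgroup : Subgroup (Heis k p d) where
  carrier := {g | g.1 ^ ∏ i, d i = 1}
  one_mem' := one_pow _
  mul_mem' {a b} ha hb := by
    show (a.1 * b.1 * b.2.2 a.2.1) ^ ∏ i, d i = 1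
    rw [mul_pow, mul_pow, ha, hb, ThetaK2.apply_pow_prod_eq_one, one_mul, one_mul]
  inv_mem' {a} ha := by
    show (a.1⁻¹ * a.2.2 a.2.1) ^ ∏ i, d i = 1
    rw [mul_pow, ThetaK2.apply_pow_prod_eq_one, inv_pow, ha, inv_one, one_mul]

theorem mem_rootsOfUnitySubgroup {g : Heis k p d} :
    g ∈ rootsOfUnitySubgroup k p d ↔ g.1 ^ ∏ i, d i = 1 := Iff.rfl

instance [∀ i, NeZero (d i)] : Finite (rootsOfUnitySubgroup k p d) := by
  have : NeZero (∏ i, d i) := ⟨Finset.prod_ne_zero_iff.2 fun i _ => NeZero.ne (d i)⟩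
  refine Finite.of_injective (fun g : rootsOfUnitySubgroup k p d =>
    ((⟨g.1.1, (mem_rootsOfUnity _ _).2 g.2⟩ : rootsOfUnity (∏ i, d i) k), g.1.2))
    fun g g' h => Subtype.ext ?_
  simp only [Prod.mk.injEq, Subtype.mk.injEq] at h
  exact Prod.ext h.1 h.2

theorem pow_prod_mul_prod_eq_one {g : Heis k p d} (hg : g ∈ rootsOfUnitySubgroup k p d) :
    g ^ ((∏ i, d i) * ∏ i, d i) = 1 := by
  have htheta : toTheta (g ^ ∏ i, d i) = 1 := by
    rw [map_pow]
    exact Prod.ext (ThetaK1.pow_prod_eq_one _) (ThetaK2.pow_prod_eq_one _)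
  have hroot : (g ^ ∏ i, d i).1 ^ ∏ i, d i = 1 :=
    mem_rootsOfUnitySubgroup.1 (pow_mem hg _)
  rw [pow_mul, eq_scalar_of_toTheta_eq_one htheta, ← map_pow, hroot, map_one]

theorem natCast_card_rootsOfUnitySubgroup_ne_zero [∀ i, NeZero (d i)]
    (hd : ∀ i, (d i : k) ≠ 0) : (Nat.card (rootsOfUnitySubgroup k p d) : k) ≠ 0 := by
  have hD : ((∏ i, d i : ℕ) : k) ≠ 0 := by
    push_cast
    exact Finset.prod_ne_zero_iff.2 fun i _ => hd i
  refine natCast_card_ne_zero_of_forall_pow_eq_one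
    (fun g => Subtype.ext ((Subgroup.coe_pow _ g _).trans (pow_prod_mul_prod_eq_one g.2))) ?_
  rw [Nat.cast_mul]
  exact mul_ne_zero hD hD

theorem repStable_comp_subtype_iff {n : ℤ} {V : Type} [AddCommGroup V] [Module k V]
    {ρ : Heis k p d →* (V →ₗ[k] V)ˣ} (hw : IsWeight n ρ) {W : Submodule k V} :
    RepStable (ρ.comp (rootsOfUnitySubgroup k p d).subtype) W ↔ RepStable ρ W := by
  refine ⟨fun h g w hwW => ?_, fun h g => h g⟩
  rw [← scalar_mul_mk_one g, map_mul, Units.val_mul, Module.End.mul_apply]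
  exact (hw _ _).symm ▸ W.smul_mem _ (h ⟨_, one_pow _⟩ w hwW)

end Heis

theorem stmt7_general {k : Type} [Field k] {p : ℕ} {d : Fin p → ℕ}
    (hchar : ∀ i, ¬ (ringChar k ∣ d i))
    (n : ℤ) (V : Type) [AddCommGroup V] [Module k V] [FiniteDimensional k V]
    (ρ : Heis k p d →* (V →ₗ[k] V)ˣ)
    (hw : IsWeight n ρ) :
    ∃ (ι : Type) (_ : Fintype ι) (_ : DecidableEq ι) (W : ι → Submodule k V),
      DirectSum.IsInternal W ∧
      ∀ i, RepStable ρ (W i) ∧ W i ≠ ⊥ ∧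
        ∀ U : Submodule k V, U ≤ W i → RepStable ρ U → U = ⊥ ∨ U = W i := by
  classical
  have hd : ∀ i, (d i : k) ≠ 0 := fun i => (ringChar.spec k (d i)).not.2 (hchar i)
  have : ∀ i, NeZero (d i) := fun i => ⟨fun h => hd i (by rw [h, Nat.cast_zero])⟩
  have : NeZero (Nat.card (Heis.rootsOfUnitySubgroup k p d) : k) :=
    ⟨Heis.natCast_card_rootsOfUnitySubgroup_ne_zero hd⟩
  set ρH := ρ.comp (Heis.rootsOfUnitySubgroup k p d).subtype
  set σ : Representation k (Heis.rootsOfUnitySubgroup k p d) V := (Units.coeHom _).comp ρH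
  have hstable (W : Submodule k V) : RepStable ρ W ↔ W ∈ σ.invtSubmodule :=
    (Heis.repStable_comp_subtype_iff hw).symm.trans (repStable_iff_mem_invtSubmodule ρH W)
  obtain ⟨s, hfin, hint, hs⟩ := σ.exists_isInternal_irreducible
  have := hfin.fintype
  refine ⟨s, inferInstance, inferInstance, (↑), hint, fun W => ?_⟩
  obtain ⟨hinv, hne, hmin⟩ := hs W W.2
  exact ⟨(hstable W).2 hinv, hne, fun U hU hUst => hmin U ((hstable U).1 hUst) hU⟩

/-- Every weight-`n` module over the Heisenberg-type group `G` of type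
`(d₁,…,d_p)` decomposes as a direct sum of irreducible weight-`n` `G`-modules (the irreducible
summands being `G`-stable subspaces with no proper nonzero `G`-stable subspace). -/
theorem stmt7 {k : Type} [Field k] [IsAlgClosed k] {p : ℕ} {d : Fin p → ℕ}
    (hd0 : ∀ i, 0 < d i) (hchain : ∀ i j : Fin p, i ≤ j → d i ∣ d j)
    (hchar : ∀ i, ¬ (ringChar k ∣ d i))
    (n : ℤ) (V : Type) [AddCommGroup V] [Module k V] [FiniteDimensional k V]
    (ρ : Heis k p d →* (V →ₗ[k] V)ˣ)
    (hw : IsWeight n ρ) :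
    ∃ (ι : Type) (_ : Fintype ι) (_ : DecidableEq ι) (W : ι → Submodule k V),
      DirectSum.IsInternal W ∧
      ∀ i, RepStable ρ (W i) ∧ W i ≠ ⊥ ∧
        ∀ U : Submodule k V, U ≤ W i → RepStable ρ U → U = ⊥ ∨ U = W i :=
  stmt7_general hchar n V ρ hw
end

section
/- The standard weight-1 representation of the Heisenberg-type group G is irreducible: on the vector space W with basis {e_z : z ∈ K₂}, the action (α,x,w)·e_z := α⟨x,z⟩ e_{z+w} defines an irreducible G-module on which k^× acts with weight 1. -/
/-!
The elements `(1, x, 1)` act by multiplication with the function `z ↦ z(x)` on `K₂`, and by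
Dedekind's independence of characters these functions span all functions on the finite group
`K₂`. So a nonzero invariant subspace contains, with any `f` and `z₀` where `f z₀ ≠ 0`, the
point mass `e_{z₀}`; the elements `(1, 1, w)` translate it to every other point mass.
-/
section LinearAlgebra

variable {k : Type*} [Field k]

theorem Matrix.span_range_col_eq_top_of_linearIndependent_row {X A : Type*} [Fintype X]
    [Fintype A] (M : Matrix X A k) (hM : LinearIndependent k M.row) :
    Submodule.span k (Set.range M.col) = ⊤ := by
  apply Submodule.eq_top_of_finrank_eq
  rw [← M.rank_eq_finrank_span_cols, M.rank_eq_finrank_span_row, finrank_span_eq_card hM,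
    Module.finrank_fintype_fun_eq_card]

theorem linearIndependent_coe_units_monoidHom (A : Type*) [MulOneClass A] :
    LinearIndependent k (fun (χ : A →* kˣ) (x : A) => (χ x : k)) :=
  (linearIndependent_monoidHom A k).comp (fun χ => (Units.coeHom k).comp χ) fun _ _ h =>
    MonoidHom.ext fun x => Units.ext (DFunLike.congr_fun h x)

theorem finite_units_monoidHom (A : Type*) [MulOneClass A] [Finite A] : Finite (A →* kˣ) :=
  (linearIndependent_coe_units_monoidHom A).finite

theorem span_range_eval_units_monoidHom_eq_top (A : Type*) [MulOneClass A] [Finite A] :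
    Submodule.span k (Set.range fun (x : A) (χ : A →* kˣ) => (χ x : k)) = ⊤ := by
  have := Fintype.ofFinite A
  have := finite_units_monoidHom (k := k) A
  have := Fintype.ofFinite (A →* kˣ)
  let M : Matrix (A →* kˣ) A k := Matrix.of fun χ x => (χ x : k)
  exact M.span_range_col_eq_top_of_linearIndependent_row (linearIndependent_coe_units_monoidHom A)

theorem Submodule.mul_mem_of_span_eq_top {R X : Type*} [CommSemiring R] {S : Set (X → R)}
    (hS : Submodule.span R S = ⊤) {W : Submodule R (X → R)}
    (hW : ∀ g ∈ S, ∀ f ∈ W, g * f ∈ W) (g : X → R) {f : X → R} (hf : f ∈ W) : g * f ∈ W := by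
  have hg : g ∈ Submodule.span R S := hS ▸ Submodule.mem_top
  induction hg using Submodule.span_induction with
  | mem g hg => exact hW g hg f hf
  | zero => simp
  | add g₁ g₂ _ _ h₁ h₂ => simpa [add_mul] using W.add_mem h₁ h₂
  | smul c g _ h => simpa [smul_mul_assoc] using W.smul_mem c h

theorem Submodule.eq_bot_or_eq_top_of_mul_mem_of_translate_mem {X : Type*} [Group X] [Finite X]
    {S : Set (X → k)} (hS : Submodule.span k S = ⊤) (W : Submodule k (X → k))
    (hmul : ∀ g ∈ S, ∀ f ∈ W, g * f ∈ W) (htrans : ∀ w : X, ∀ f ∈ W, (fun z => f (z * w⁻¹)) ∈ W) :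
    W = ⊥ ∨ W = ⊤ := by
  classical
  refine or_iff_not_imp_left.2 fun hW => ?_
  obtain ⟨f, hfW, hf⟩ := W.ne_bot_iff.1 hW
  obtain ⟨z₀, hz₀⟩ : ∃ z₀, f z₀ ≠ 0 := Function.ne_iff.1 hf
  have hsingle₀ : Pi.single z₀ (1 : k) ∈ W := by
    convert mul_mem_of_span_eq_top hS hmul (Pi.single z₀ (f z₀)⁻¹) hfW using 1
    ext z
    rcases eq_or_ne z z₀ with rfl | hz
    · simp [inv_mul_cancel₀ hz₀]
    · simp [hz]
  have hsingle (z : X) : Pi.single z (1 : k) ∈ W := by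
    convert htrans (z₀⁻¹ * z) _ hsingle₀ using 1
    ext y
    simp only [Pi.single_apply, ← eq_mul_inv_iff_mul_eq, mul_inv_rev, inv_inv,
      mul_inv_cancel_left]
  rw [eq_top_iff, ← (Pi.basisFun k X).span_eq, Submodule.span_le]
  rintro _ ⟨z, rfl⟩
  simpa using hsingle z

end LinearAlgebra

namespace Heis

variable {k : Type} [Field k] {p : ℕ} {d : Fin p → ℕ}

/- The `Inv` instance that `⁻¹` elaborates to on `ThetaK2` is not reducibly the one of its
`CommGroup` structure, so `inv_one` and `mul_inv` do not rewrite there; hence these two. -/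
theorem thetaK2_mul_inv_one (z : ThetaK2 k p d) : z * (1 : ThetaK2 k p d)⁻¹ = z :=
  MonoidHom.ext fun _ => by simp

theorem thetaK2_mul_mul_inv (z χ ψ : ThetaK2 k p d) : z * (χ * ψ)⁻¹ = z * χ⁻¹ * ψ⁻¹ :=
  MonoidHom.ext fun _ => by simp [mul_assoc, mul_comm]

/-- On the point mass `e_z` the element `(α, x, w)` acts as `e_z ↦ α ⟨x, z⟩ e_{z w}`. -/
def standardRep : Heis k p d →* ((ThetaK2 k p d → k) →ₗ[k] (ThetaK2 k p d → k)) where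
  toFun g :=
    { toFun f z := (g.1 : k) * ((z * g.2.2⁻¹) g.2.1 : k) * f (z * g.2.2⁻¹)
      map_add' f₁ f₂ := by ext z; simp [mul_add]
      map_smul' c f := by ext z; simp [mul_left_comm] }
  map_one' := by ext f z; simp [one_def, thetaK2_mul_inv_one]
  map_mul' a b := by
    ext f z
    simp only [mul_def, thetaK2_mul_mul_inv, LinearMap.coe_mk, AddHom.coe_mk,
      Module.End.mul_apply, MonoidHom.mul_apply, MonoidHom.inv_apply, map_mul, Units.val_mul,
      Units.val_inv_eq_inv_val]
    field_simp

theorem standardRep_apply (g : Heis k p d) (f : ThetaK2 k p d → k) (z : ThetaK2 k p d) :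
    standardRep g f z = (g.1 : k) * ((z * g.2.2⁻¹) g.2.1 : k) * f (z * g.2.2⁻¹) :=
  rfl

theorem standardRep_mk_one_one (α : kˣ) (f : ThetaK2 k p d → k) :
    standardRep (mk α 1 1) f = (α : k) • f := by
  ext z; rw [standardRep_apply]; simp [mk, thetaK2_mul_inv_one]

theorem standardRep_mk_one_left (x : ThetaK1 p d) (f : ThetaK2 k p d → k) :
    standardRep (mk 1 x 1) f = (fun z => (z x : k)) * f := by
  ext z; rw [standardRep_apply]; simp [mk, thetaK2_mul_inv_one]

theorem standardRep_mk_one_right (w : ThetaK2 k p d) (f : ThetaK2 k p d → k) :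
    standardRep (mk 1 1 w) f = fun z => f (z * w⁻¹) := by
  ext z; rw [standardRep_apply]; simp [mk]

end Heis

theorem stmt10_general {k : Type} [Field k] {p : ℕ} {d : Fin p → ℕ}
    (hd0 : ∀ i, 0 < d i) :
    ∃ ρ : Heis k p d →* ((ThetaK2 k p d → k) →ₗ[k] (ThetaK2 k p d → k))ˣ,
      (∀ (α : kˣ) (x : ThetaK1 p d) (w : ThetaK2 k p d)
        (f : ThetaK2 k p d → k) (z : ThetaK2 k p d),
        (ρ (Heis.mk α x w) : (ThetaK2 k p d → k) →ₗ[k] (ThetaK2 k p d → k)) f z =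
          (α : k) * (((z * w⁻¹) x : kˣ) : k) * f (z * w⁻¹)) ∧
      IsWeight 1 ρ ∧ RepIrred ρ := by
  have (i : Fin p) : NeZero (d i) := ⟨(hd0 i).ne'⟩
  have := finite_units_monoidHom (k := k) (ThetaK1 p d)
  refine ⟨Heis.standardRep.toHomUnits, fun _ _ _ _ _ => rfl, fun α f => ?_,
    ⟨⟨fun _ => 1, fun h => one_ne_zero (congrFun h 1)⟩, fun W hW => ?_⟩⟩
  · simp [Heis.standardRep_mk_one_one]
  refine W.eq_bot_or_eq_top_of_mul_mem_of_translate_mem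
    (span_range_eval_units_monoidHom_eq_top (ThetaK1 p d)) ?_ fun w f hf => ?_
  · rintro _ ⟨x, rfl⟩ f hf
    exact Heis.standardRep_mk_one_left x f ▸ hW (Heis.mk 1 x 1) f hf
  · exact Heis.standardRep_mk_one_right w f ▸ hW (Heis.mk 1 1 w) f hf

/-- The standard weight-1 representation of the Heisenberg-type group `G` is
irreducible: on the vector space `W` with basis `{e_z : z ∈ K₂}` (realized as functions
`K₂ → k`), the action `(α,x,w)·e_z := α ⟨x,z⟩ e_{z·w}` (i.e., on functions,
`((α,x,w)·f)(z) = α · (z·w⁻¹)(x) · f(z·w⁻¹)`) defines an irreducible `G`-module on which `kˣ`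
acts with weight 1. -/
theorem stmt10 {k : Type} [Field k] [IsAlgClosed k] {p : ℕ} {d : Fin p → ℕ}
    (hd0 : ∀ i, 0 < d i) (hchain : ∀ i j : Fin p, i ≤ j → d i ∣ d j)
    (hchar : ∀ i, ¬ (ringChar k ∣ d i)) :
    ∃ ρ : Heis k p d →* ((ThetaK2 k p d → k) →ₗ[k] (ThetaK2 k p d → k))ˣ,
      (∀ (α : kˣ) (x : ThetaK1 p d) (w : ThetaK2 k p d)
        (f : ThetaK2 k p d → k) (z : ThetaK2 k p d),
        (ρ (Heis.mk α x w) : (ThetaK2 k p d → k) →ₗ[k] (ThetaK2 k p d → k)) f z =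
          (α : k) * (((z * w⁻¹) x : kˣ) : k) * f (z * w⁻¹)) ∧
      IsWeight 1 ρ ∧ RepIrred ρ :=
  stmt10_general hd0
end
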